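/- arXiv:2211.02021 — 6 statements merged into one kernel-verified Lean document; each statement's English description precedes it below -/
import Mathlib

section
/- A sock ordering ρ is foot-sortable if and only if there exists a word that represents ρ and avoids the pattern 231, i.e., a word w representing ρ such that there are no indices i < j < k with w_k < w_i < w_j. -/
/-- Two words represent the same sock ordering iff they have the same length and the
same pattern of letter equalities. -/
def SockEquiv (w v : List ℕ) : Prop :=
  w.length = v.length ∧ ∀ i j, i < w.length → j < w.length →
    (w.getD i 0 = w.getD j 0 ↔ v.getD i 0 = v.getD j 0)

theorem sockEquiv_refl (w : List ℕ) : SockEquiv w w :=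
  ⟨rfl, fun _ _ _ _ => Iff.rfl⟩

theorem sockEquiv_symm {w v : List ℕ} (h : SockEquiv w v) : SockEquiv v w := by
  obtain ⟨hl, he⟩ := h
  exact ⟨hl.symm, fun i j hi hj => (he i j (by omega) (by omega)).symm⟩

theorem sockEquiv_trans {u v w : List ℕ} (h1 : SockEquiv u v) (h2 : SockEquiv v w) :
    SockEquiv u w := by
  obtain ⟨hl1, he1⟩ := h1
  obtain ⟨hl2, he2⟩ := h2
  exact ⟨hl1.trans hl2, fun i j hi hj =>
    (he1 i j hi hj).trans (he2 i j (by omega) (by omega))⟩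

instance sockSetoid : Setoid (List ℕ) :=
  ⟨SockEquiv, ⟨sockEquiv_refl, sockEquiv_symm, sockEquiv_trans⟩⟩

/-- A sock ordering is an equivalence class of words. -/
def SockOrdering : Type := Quotient sockSetoid

/-- The length of a sock ordering. -/
def SockOrdering.length : SockOrdering → ℕ :=
  Quotient.lift List.length fun _ _ h => h.1

/-- One step of the (nondeterministic) one-stack (one-foot) sorting procedure, acting on
(input, stack, output) triples: push the leftmost input letter onto the stack, or pop
the top letter of the stack onto the right end of the output. -/
inductive StackStep : List ℕ × List ℕ × List ℕ → List ℕ × List ℕ × List ℕ → Prop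
  | push (a : ℕ) (inp st out : List ℕ) :
      StackStep (a :: inp, st, out) (inp, a :: st, out)
  | pop (a : ℕ) (inp st out : List ℕ) :
      StackStep (inp, a :: st, out) (inp, st, out ++ [a])

/-- `out` is obtainable from `w` by one pass through a stack. -/
def IsStackOutput (w out : List ℕ) : Prop :=
  Relation.ReflTransGen StackStep (w, [], []) ([], [], out)

/-- A word has all equal letters consecutive, i.e. it represents a sorted sock ordering. -/
def SortedWordSock (w : List ℕ) : Prop :=
  ∀ i j k, i < j → j < k → k < w.length →
    w.getD i 0 = w.getD k 0 → w.getD i 0 = w.getD j 0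

/-- A sock ordering is sorted if some (equivalently, every) word representing it has all
equal letters consecutive. -/
def SockOrdering.IsSorted (ρ : SockOrdering) : Prop :=
  ∃ w : List ℕ, (⟦w⟧ : SockOrdering) = ρ ∧ SortedWordSock w

/-- `foot ρ` is the set of sock orderings represented by the outputs obtainable by
one pass of foot-sorting applied to a word representing `ρ`. -/
def foot (ρ : SockOrdering) : Set SockOrdering :=
  {κ | ∃ w out : List ℕ, (⟦w⟧ : SockOrdering) = ρ ∧ IsStackOutput w out ∧
    (⟦out⟧ : SockOrdering) = κ}

/-- Iterated foot-sorting: `footIter 0 ρ = {ρ}` and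
`footIter (t+1) ρ = ⋃ κ ∈ footIter t ρ, foot κ`. -/
def footIter : ℕ → SockOrdering → Set SockOrdering
  | 0, ρ => {ρ}
  | t + 1, ρ => ⋃ κ ∈ footIter t ρ, foot κ

/-- A sock ordering is `t`-foot-sortable if `foot^t ρ` contains a sorted sock ordering. -/
def FootSortable (t : ℕ) (ρ : SockOrdering) : Prop :=
  ∃ κ ∈ footIter t ρ, κ.IsSorted

/-- `ρ` has exactly `n` colors. -/
def HasColors (ρ : SockOrdering) (n : ℕ) : Prop :=
  ∃ w : List ℕ, (⟦w⟧ : SockOrdering) = ρ ∧ w.toFinset.card = n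

/-- `ρ` is `r`-uniform: every color appears exactly `r` times. -/
def RUniform (r : ℕ) (ρ : SockOrdering) : Prop :=
  ∃ w : List ℕ, (⟦w⟧ : SockOrdering) = ρ ∧ ∀ a ∈ w, w.count a = r

/-- `ρ` contains `ρ'` as a (sock) pattern: some word representing `ρ` has a subsequence
representing `ρ'`. -/
def Contains (ρ ρ' : SockOrdering) : Prop :=
  ∃ w u : List ℕ, (⟦w⟧ : SockOrdering) = ρ ∧ u.Sublist w ∧ (⟦u⟧ : SockOrdering) = ρ'

/-- A word is stratified with `n` colors and `r` blocks: it is the concatenation of `r`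
blocks of length `n`, each containing every color exactly once. -/
def StratifiedWord (n r : ℕ) (w : List ℕ) : Prop :=
  ∃ blocks : List (List ℕ), blocks.length = r ∧ w = blocks.flatten ∧
    ∀ b ∈ blocks, b.length = n ∧ b.Nodup ∧ b.toFinset = w.toFinset

/-- An `r`-uniform stratified sock ordering with `n` colors. -/
def IsStratified (n r : ℕ) (ρ : SockOrdering) : Prop :=
  ∃ w : List ℕ, (⟦w⟧ : SockOrdering) = ρ ∧ StratifiedWord n r w

/-- The word `σ(1) σ(2) ⋯ σ(n)` (with values written in `{1,…,n}`). -/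
def permWord (n : ℕ) (σ : Equiv.Perm (Fin n)) : List ℕ :=
  (List.finRange n).map fun i => (σ i : ℕ) + 1

/-- The word `1 2 ⋯ n σ(1) σ(2) ⋯ σ(n)` representing the alignment-free 2-uniform sock
ordering associated with `σ`. -/
def afWord (n : ℕ) (σ : Equiv.Perm (Fin n)) : List ℕ :=
  ((List.finRange n).map fun i => (i : ℕ) + 1) ++ permWord n σ

/-- A word `w` contains the (permutation) pattern `p`: some subsequence of `w` of the same
length as `p` is order-isomorphic to `p`. -/
def ContainsPattern (w p : List ℕ) : Prop :=
  ∃ s : List ℕ, s.Sublist w ∧ s.length = p.length ∧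
    ∀ i j, i < s.length → j < s.length →
      (s.getD i 0 < s.getD j 0 ↔ p.getD i 0 < p.getD j 0)

def AvoidsPattern (w p : List ℕ) : Prop := ¬ ContainsPattern w p

/-- A word avoids the permutation patterns 123, 132, and 213. -/
def Avoids123_132_213 (w : List ℕ) : Prop :=
  AvoidsPattern w [1, 2, 3] ∧ AvoidsPattern w [1, 3, 2] ∧ AvoidsPattern w [2, 1, 3]

/-- A word avoids the pattern 231: there are no indices `i < j < k` with `w k < w i < w j`. -/
def Avoids231 (w : List ℕ) : Prop :=
  ¬ ∃ i j k, i < j ∧ j < k ∧ k < w.length ∧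
    w.getD k 0 < w.getD i 0 ∧ w.getD i 0 < w.getD j 0




abbrev SRun (s t : List ℕ × List ℕ × List ℕ) : Prop := Relation.ReflTransGen StackStep s t

lemma stackStep_extend {s t} (h : StackStep s t) (I S O : List ℕ) :
    StackStep (s.1 ++ I, s.2.1 ++ S, O ++ s.2.2) (t.1 ++ I, t.2.1 ++ S, O ++ t.2.2) := by
  cases h with
  | push a inp st out => exact StackStep.push a (inp ++ I) (st ++ S) (O ++ out)
  | pop a inp st out =>
      have := StackStep.pop a (inp ++ I) (st ++ S) (O ++ out)
      simpa [List.append_assoc] using this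

lemma run_extend {s t} (h : SRun s t) (I S O : List ℕ) :
    SRun (s.1 ++ I, s.2.1 ++ S, O ++ s.2.2) (t.1 ++ I, t.2.1 ++ S, O ++ t.2.2) := by
  induction h with
  | refl => exact Relation.ReflTransGen.refl
  | tail _ hst ih => exact ih.tail (stackStep_extend hst I S O)

lemma run_extend' {i s o i' s' o'} (h : SRun (i, s, o) (i', s', o')) (I S O : List ℕ) :
    SRun (i ++ I, s ++ S, O ++ o) (i' ++ I, s' ++ S, O ++ o') :=
  run_extend h I S O

lemma run_strip {out : List ℕ} :
    ∀ {p}, SRun p ([], [], out) → ∀ i s o, p = (i, s, o) →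
      ∃ out', out = o ++ out' ∧ SRun (i, s, []) ([], [], out') := by
  intro p h
  induction h using Relation.ReflTransGen.head_induction_on with
  | refl =>
      intro i s o hp
      cases hp
      exact ⟨[], by simp, Relation.ReflTransGen.refl⟩
  | head hst _ ih =>
      intro i s o hp
      subst hp
      cases hst with
      | push a inp _st _out =>
          obtain ⟨out', h1, h2⟩ := ih inp (a :: s) o rfl
          exact ⟨out', h1, Relation.ReflTransGen.head (StackStep.push a inp s []) h2⟩
      | pop a _inp st _out =>
          obtain ⟨out', h1, h2⟩ := ih i st (o ++ [a]) rfl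
          refine ⟨a :: out', by simpa [List.append_assoc] using h1, ?_⟩
          refine Relation.ReflTransGen.head (StackStep.pop a i st []) ?_
          simpa using run_extend' h2 [] [] [a]

lemma run_split {out : List ℕ} :
    ∀ {p}, SRun p ([], [], out) → ∀ w st o a, p = (w, st ++ [a], o) →
      ∃ u v ou ov, w = u ++ v ∧ out = o ++ ou ++ a :: ov ∧
        SRun (u, st, []) ([], [], ou) ∧ SRun (v, [], []) ([], [], ov) := by
  intro p h
  induction h using Relation.ReflTransGen.head_induction_on with
  | refl =>
      intro w st o a hp
      exfalso
      have h2 := congrArg (fun q => q.2.1) hp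
      simp at h2
  | head hst _ ih =>
      intro w st o a hp
      subst hp
      cases st with
      | nil =>
          simp only [List.nil_append] at hst
          cases hst with
          | push b inp _st _out =>
              obtain ⟨u, v, ou, ov, h1, h2, h3, h4⟩ := ih inp (b :: []) o a rfl
              exact ⟨b :: u, v, ou, ov, by simp [h1], h2,
                Relation.ReflTransGen.head (StackStep.push b u [] []) h3, h4⟩
          | pop _inp _st _out =>
              -- now at (w, [], o ++ [a])
              obtain ⟨out', hh1, hh2⟩ := run_strip (by assumption) w [] (o ++ [a]) rfl
              exact ⟨[], w, [], out', rfl, by simp [hh1], Relation.ReflTransGen.refl, hh2⟩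
      | cons c st2 =>
          simp only [List.cons_append] at hst
          cases hst with
          | push b inp _st _out =>
              obtain ⟨u, v, ou, ov, h1, h2, h3, h4⟩ := ih inp (b :: c :: st2) o a rfl
              exact ⟨b :: u, v, ou, ov, by simp [h1], h2,
                Relation.ReflTransGen.head (StackStep.push b u (c :: st2) []) h3, h4⟩
          | pop _inp _st _out =>
              obtain ⟨u, v, ou, ov, h1, h2, h3, h4⟩ := ih w st2 (o ++ [c]) a rfl
              refine ⟨u, v, c :: ou, ov, h1, by simpa [List.append_assoc] using h2, ?_, h4⟩
              refine Relation.ReflTransGen.head (StackStep.pop c u st2 []) ?_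
              simpa using run_extend' h3 [] [] [c]

lemma isStackOutput_nil {out : List ℕ} (h : IsStackOutput [] out) : out = [] := by
  rcases Relation.ReflTransGen.cases_head h with heq | ⟨c, hst, _⟩
  · exact (congrArg (fun q => q.2.2) heq).symm
  · cases hst

lemma isStackOutput_nil' : IsStackOutput [] [] := Relation.ReflTransGen.refl

lemma isStackOutput_cons {a : ℕ} {w out : List ℕ} :
    IsStackOutput (a :: w) out ↔ ∃ u v ou ov, w = u ++ v ∧ out = ou ++ a :: ov ∧
      IsStackOutput u ou ∧ IsStackOutput v ov := by
  constructor
  · intro h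
    rcases Relation.ReflTransGen.cases_head h with heq | ⟨c, hst, hrun⟩
    · exfalso
      have := (Prod.mk.injEq .. ▸ heq).1
      simp at this
    · cases hst with
      | push _ inp _st _out =>
          obtain ⟨u, v, ou, ov, h1, h2, h3, h4⟩ := run_split hrun w [] [] a rfl
          exact ⟨u, v, ou, ov, h1, by simpa using h2, h3, h4⟩
  · rintro ⟨u, v, ou, ov, rfl, rfl, hu, hv⟩
    refine Relation.ReflTransGen.head (StackStep.push a (u ++ v) [] []) ?_
    have s1 : SRun (u ++ v, [a], []) (v, [a], ou) := by
      simpa using run_extend' hu v [a] []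
    have s2 : SRun (v, [], ou ++ [a]) ([], [], (ou ++ [a]) ++ ov) := by
      simpa using run_extend' hv [] [] (ou ++ [a])
    have : SRun (u ++ v, [a], []) ([], [], (ou ++ [a]) ++ ov) :=
      (s1.tail (StackStep.pop a v [] ou)).trans s2
    simpa [List.append_assoc] using this

lemma isStackOutput_perm : ∀ n (w out : List ℕ), w.length ≤ n →
    IsStackOutput w out → w.Perm out := by
  intro n
  induction n with
  | zero =>
      intro w out hlen h
      have : w = [] := List.eq_nil_of_length_eq_zero (Nat.le_zero.mp hlen)
      subst this
      simp [isStackOutput_nil h]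
  | succ n ih =>
      intro w out hlen h
      cases w with
      | nil => simp [isStackOutput_nil h]
      | cons a w' =>
          obtain ⟨u, v, ou, ov, rfl, rfl, hu, hv⟩ := isStackOutput_cons.mp h
          simp only [List.length_cons, List.length_append] at hlen
          have pu := ih u ou (by omega) hu
          have pv := ih v ov (by omega) hv
          exact ((pu.append pv).cons a).trans List.perm_middle.symm



lemma getD_infix (s l t : List ℕ) (m : ℕ) (hm : m < l.length) :
    (s ++ l ++ t).getD (s.length + m) 0 = l.getD m 0 := by
  rw [List.append_assoc, List.getD_append_right _ _ _ _ (by omega)]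
  rw [Nat.add_sub_cancel_left, List.getD_append _ _ _ _ hm]

lemma avoids231_infix {s l t : List ℕ} (h : Avoids231 (s ++ l ++ t)) : Avoids231 l := by
  rintro ⟨i, j, k, hij, hjk, hk, h1, h2⟩
  apply h
  refine ⟨s.length + i, s.length + j, s.length + k, by omega, by omega, ?_, ?_, ?_⟩
  · simp only [List.length_append]; omega
  · rw [getD_infix s l t i (by omega), getD_infix s l t k (by omega)]; exact h1
  · rw [getD_infix s l t i (by omega), getD_infix s l t j (by omega)]; exact h2

lemma exists_sorted_stack_output : ∀ n (w : List ℕ), w.length ≤ n → Avoids231 w →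
    ∃ out, IsStackOutput w out ∧ List.Pairwise (· ≤ ·) out := by
  intro n
  induction n with
  | zero =>
      intro w hlen _
      have : w = [] := List.eq_nil_of_length_eq_zero (Nat.le_zero.mp hlen)
      subst this
      exact ⟨[], isStackOutput_nil', List.Pairwise.nil⟩
  | succ n ih =>
      intro w hlen hav
      cases w with
      | nil => exact ⟨[], isStackOutput_nil', List.Pairwise.nil⟩
      | cons a w' =>
          obtain ⟨u, hu⟩ : ∃ u, u = w'.takeWhile (· ≤ a) := ⟨_, rfl⟩
          obtain ⟨v, hv⟩ : ∃ v, v = w'.dropWhile (· ≤ a) := ⟨_, rfl⟩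
          have hsplit : w' = u ++ v := by rw [hu, hv]; exact (List.takeWhile_append_dropWhile ..).symm
          have hlen' : u.length + v.length ≤ n := by
            have := congrArg List.length hsplit
            simp only [List.length_append] at this
            simp only [List.length_cons] at hlen
            omega
          have havu : Avoids231 u := by
            have hw : a :: w' = [a] ++ u ++ v := by simp [hsplit]
            exact avoids231_infix (s := [a]) (t := v) (by rwa [← hw])
          have havv : Avoids231 v := by
            have hw2 : a :: w' = (a :: u) ++ v ++ [] := by simp [hsplit]
            exact avoids231_infix (s := a :: u) (t := []) (by rwa [← hw2])
          have hule : ∀ x ∈ u, x ≤ a := fun x hx => by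
            rw [hu] at hx
            simpa using List.mem_takeWhile_imp hx
          have hvge : ∀ x ∈ v, a ≤ x := by
            intro x hx
            by_contra hxa
            push_neg at hxa
            obtain ⟨b, v'', hvv⟩ : ∃ b v'', v = b :: v'' := by
              cases hvvv : v with
              | nil => rw [hvvv] at hx; simp at hx
              | cons b v'' => exact ⟨b, v'', rfl⟩
            have hb : a < b := by
              have hd : w'.dropWhile (fun x => decide (x ≤ a)) = b :: v'' := hv ▸ hvv
              have h7 := List.head?_dropWhile_not (fun x => decide (x ≤ a)) w'
              rw [hd] at h7
              simp only [List.head?_cons, decide_eq_false_iff_not, not_le] at h7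
              exact h7
            rw [hvv, List.mem_cons] at hx
            rcases hx with hx | hx
            · omega
            · apply hav
              have hWeq : a :: w' = ([a] ++ u) ++ (b :: v'') ++ [] := by
                simp [hsplit, hvv]
              have hWeq2 : a :: w' = ([a] ++ u ++ [b]) ++ v'' ++ [] := by
                simp [hsplit, hvv]
              have hidx := List.idxOf_lt_length_iff.mpr hx
              refine ⟨0, u.length + 1, u.length + 2 + v''.idxOf x, by omega, by omega,
                ?_, ?_, ?_⟩
              · have : (a :: w').length = u.length + 2 + v''.length := by
                  rw [hWeq2]; simp; omega
                omega
              · have e1 : (a :: w').getD 0 0 = a := rfl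
                have e2 : (a :: w').getD (u.length + 2 + v''.idxOf x) 0 = x := by
                  have hL : u.length + 2 + v''.idxOf x
                      = ([a] ++ u ++ [b]).length + v''.idxOf x := by simp
                  rw [hL, hWeq2, getD_infix _ _ _ _ hidx, List.getD_eq_getElem _ _ hidx]
                  exact List.getElem_idxOf hidx
                rw [e1, e2]; exact hxa
              · have e1 : (a :: w').getD 0 0 = a := rfl
                have e3 : (a :: w').getD (u.length + 1) 0 = b := by
                  have hL : u.length + 1 = ([a] ++ u).length + 0 := by simp
                  rw [hL, hWeq, getD_infix _ _ _ _ (by simp)]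
                  rfl
                rw [e1, e3]; exact hb
          obtain ⟨ou, hou, hsou⟩ := ih u (by omega) havu
          obtain ⟨ov, hov, hsov⟩ := ih v (by omega) havv
          refine ⟨ou ++ a :: ov, ?_, ?_⟩
          · exact isStackOutput_cons.mpr ⟨u, v, ou, ov, hsplit, rfl, hou, hov⟩
          · have hpu := isStackOutput_perm u.length u ou le_rfl hou
            have hpv := isStackOutput_perm v.length v ov le_rfl hov
            refine List.pairwise_append.mpr ⟨hsou, ?_, ?_⟩
            · exact List.pairwise_cons.mpr ⟨fun b hb => hvge b (hpv.mem_iff.mpr hb), hsov⟩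
            · intro x hx y hy
              have hxa : x ≤ a := hule x (hpu.mem_iff.mpr hx)
              rw [List.mem_cons] at hy
              rcases hy with rfl | hy
              · exact hxa
              · exact le_trans hxa (hvge y (hpv.mem_iff.mpr hy))

lemma sortedWordSock_prefix {x y : List ℕ} (h : SortedWordSock (x ++ y)) :
    SortedWordSock x := by
  intro i j k hij hjk hk heq
  have e : ∀ m, m < x.length → x.getD m 0 = (x ++ y).getD m 0 := fun m hm =>
    (List.getD_append _ _ _ _ hm).symm
  rw [e i (by omega), e k (by omega)] at heq
  rw [e i (by omega), e j (by omega)]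
  exact h i j k hij hjk (by simp; omega) heq

lemma sortedWordSock_suffix {x y : List ℕ} (h : SortedWordSock (x ++ y)) :
    SortedWordSock y := by
  intro i j k hij hjk hk heq
  have e : ∀ m, m < y.length → y.getD m 0 = (x ++ y).getD (x.length + m) 0 := by
    intro m hm
    rw [List.getD_append_right _ _ _ _ (by omega), Nat.add_sub_cancel_left]
  rw [e i (by omega), e k (by omega)] at heq
  rw [e i (by omega), e j (by omega)]
  exact h _ _ _ (by omega) (by omega) (by simp; omega) heq

/-- In a sorted word, values at positions between two equal values are equal to them. -/
lemma sortedWordSock_between {s : List ℕ} (h : SortedWordSock s) {i k : ℕ}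
    (hik : i < k) (hk : k < s.length) (heq : s.getD i 0 = s.getD k 0) :
    ∀ m, i ≤ m → m ≤ k → s.getD m 0 = s.getD i 0 := by
  intro m h1 h2
  rcases eq_or_lt_of_le h1 with rfl | h1
  · rfl
  rcases eq_or_lt_of_le h2 with rfl | h2
  · exact heq.symm
  exact (h i m k h1 h2 hk heq).symm

section PFacts

variable {ou ov : List ℕ} {a : ℕ}

lemma out_getD_mid : (ou ++ a :: ov).getD ou.length 0 = a := by
  rw [List.getD_append_right _ _ _ _ le_rfl, Nat.sub_self]; rfl

lemma out_getD_left {p : ℕ} (hp : p < ou.length) :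
    (ou ++ a :: ov).getD p 0 = ou.getD p 0 := List.getD_append _ _ _ _ hp

lemma out_getD_right {r : ℕ} :
    (ou ++ a :: ov).getD (ou.length + 1 + r) 0 = ov.getD r 0 := by
  rw [List.getD_append_right _ _ _ _ (by omega)]
  have : ou.length + 1 + r - ou.length = r + 1 := by omega
  rw [this]
  rfl

lemma getD_indexOf {out : List ℕ} {x : ℕ} (hx : x ∈ out) :
    out.getD (out.idxOf x) 0 = x := by
  have h := List.idxOf_lt_length_iff.mpr hx
  rw [List.getD_eq_getElem _ _ h]
  exact List.getElem_idxOf h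

lemma fact_P1 {x : ℕ} (hx : x ∈ ou) :
    (ou ++ a :: ov).idxOf x = ou.idxOf x ∧ (ou ++ a :: ov).idxOf x < ou.length :=
  ⟨List.idxOf_append_of_mem hx, by
    rw [List.idxOf_append_of_mem hx]; exact List.idxOf_lt_length_iff.mpr hx⟩

lemma fact_P2 : (ou ++ a :: ov).idxOf a ≤ ou.length := by
  by_cases h : a ∈ ou
  · exact le_of_lt (fact_P1 h).2
  · rw [List.idxOf_append_of_notMem h, List.idxOf_cons_self]
    omega

lemma fact_P4 (hsort : SortedWordSock (ou ++ a :: ov)) {x : ℕ} (hx : x ∈ ou) (hxa : x ≠ a) :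
    (ou ++ a :: ov).idxOf x < (ou ++ a :: ov).idxOf a := by
  set out := ou ++ a :: ov with hout
  have hxout : x ∈ out := List.mem_append_left _ hx
  have haout : a ∈ out := by simp [hout]
  have hfx := (fact_P1 (a := a) (ov := ov) hx).2
  rw [← hout] at hfx
  by_contra hle
  push_neg at hle
  have hne : out.idxOf a ≠ out.idxOf x := by
    intro hcon
    apply hxa
    rw [← getD_indexOf hxout, ← getD_indexOf haout, hcon]
  have hlt : out.idxOf a < out.idxOf x := by omega
  have hmid : out.getD ou.length 0 = a := out_getD_mid
  have heq : out.getD (out.idxOf a) 0 = out.getD ou.length 0 := by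
    rw [hmid, getD_indexOf haout]
  have := sortedWordSock_between hsort (i := out.idxOf a) (k := ou.length)
    (by omega) (by simp [hout]) heq (out.idxOf x) (by omega) (by omega)
  rw [getD_indexOf hxout, getD_indexOf haout] at this
  exact hxa this

lemma fact_P3 (hsort : SortedWordSock (ou ++ a :: ov)) {x : ℕ} (hx : x ∈ ov) (hxa : x ≠ a) :
    (ou ++ a :: ov).idxOf a < (ou ++ a :: ov).idxOf x := by
  set out := ou ++ a :: ov with hout
  have hxout : x ∈ out := by simp [hout, hx]
  have haout : a ∈ out := by simp [hout]
  have hq : out.getD (ou.length + 1 + ov.idxOf x) 0 = x := by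
    rw [out_getD_right]
    exact getD_indexOf hx
  have hqlen : ou.length + 1 + ov.idxOf x < out.length := by
    have := List.idxOf_lt_length_iff.mpr hx
    simp [hout]; omega
  by_contra hle
  push_neg at hle
  have hne : out.idxOf x ≠ out.idxOf a := by
    intro hcon
    apply hxa
    rw [← getD_indexOf hxout, ← getD_indexOf haout, hcon]
  have hlt : out.idxOf x < out.idxOf a := by omega
  have hfa := fact_P2 (ou := ou) (a := a) (ov := ov)
  rw [← hout] at hfa
  have heq : out.getD (out.idxOf x) 0 = out.getD (ou.length + 1 + ov.idxOf x) 0 := by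
    rw [hq, getD_indexOf hxout]
  have := sortedWordSock_between hsort (i := out.idxOf x)
    (k := ou.length + 1 + ov.idxOf x) (by omega) hqlen heq (out.idxOf a)
    (by omega) (by omega)
  rw [getD_indexOf hxout, getD_indexOf haout] at this
  exact hxa this.symm

lemma fact_C1 (hsort : SortedWordSock (ou ++ a :: ov)) {x : ℕ} (hx : x ∈ ov) (hxa : x ≠ a) :
    (ou ++ a :: ov).idxOf x = ou.length + 1 + ov.idxOf x := by
  set out := ou ++ a :: ov with hout
  have hnotou : x ∉ ou := by
    intro hmem
    have hp := List.idxOf_lt_length_iff.mpr hmem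
    have h1 : out.getD (ou.length + 1 + ov.idxOf x) 0 = x := by
      rw [out_getD_right]; exact getD_indexOf hx
    have h2 : out.getD (ou.idxOf x) 0 = x := by
      rw [out_getD_left hp]; exact getD_indexOf hmem
    have hqlen : ou.length + 1 + ov.idxOf x < out.length := by
      have := List.idxOf_lt_length_iff.mpr hx
      simp [hout]; omega
    have := sortedWordSock_between hsort (i := ou.idxOf x)
      (k := ou.length + 1 + ov.idxOf x) (by omega) hqlen (by rw [h1, h2])
      ou.length (by omega) (by omega)
    rw [h2, out_getD_mid] at this
    exact hxa this.symm
  rw [List.idxOf_append_of_notMem hnotou, List.idxOf_cons_ne _ (Ne.symm hxa)]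
  omega

lemma fact_C2 (hsort : SortedWordSock (ou ++ a :: ov)) (ha : a ∈ ov) :
    ov.idxOf a = 0 ∧ ov.getD 0 0 = a := by
  set out := ou ++ a :: ov with hout
  have hr := List.idxOf_lt_length_iff.mpr ha
  have h1 : out.getD (ou.length + 1 + ov.idxOf a) 0 = a := by
    rw [out_getD_right]; exact getD_indexOf ha
  have hqlen : ou.length + 1 + ov.idxOf a < out.length := by simp [hout]; omega
  have hbet := sortedWordSock_between hsort (i := ou.length)
    (k := ou.length + 1 + ov.idxOf a) (by omega) hqlen
    (by rw [h1, out_getD_mid]) (ou.length + 1) (by omega) (by omega)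
  rw [out_getD_mid] at hbet
  have h0 : ov.getD 0 0 = a := by
    have : out.getD (ou.length + 1 + 0) 0 = ov.getD 0 0 := out_getD_right
    rw [← this]
    simpa using hbet
  refine ⟨?_, h0⟩
  cases hov : ov with
  | nil => rw [hov] at ha; simp at ha
  | cons c t =>
      have : c = a := by rw [hov] at h0; simpa using h0
      rw [this]
      exact List.idxOf_cons_self

lemma fact_P5 (hsort : SortedWordSock (ou ++ a :: ov)) {x y : ℕ} (hx : x ∈ ov) (hy : y ∈ ov) :
    ((ou ++ a :: ov).idxOf x < (ou ++ a :: ov).idxOf y ↔ ov.idxOf x < ov.idxOf y) := by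
  by_cases hxa : x = a <;> by_cases hya : y = a
  · subst hxa; subst hya; simp
  · subst hxa
    have h1 := fact_P3 hsort hy hya
    have h2 : ov.idxOf x = 0 := (fact_C2 hsort hx).1
    have h3 : ov.idxOf y ≠ 0 := by
      intro hcon
      apply hya
      have h4 := getD_indexOf hy
      rw [hcon] at h4
      rw [← h4, (fact_C2 hsort hx).2]
    constructor
    · intro; omega
    · intro; exact h1
  · subst hya
    have h1 := fact_P3 hsort hx hxa
    have h2 : ov.idxOf y = 0 := (fact_C2 hsort hy).1
    constructor
    · intro; omega
    · intro; omega
  · rw [fact_C1 hsort hx hxa, fact_C1 hsort hy hya]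
    omega

end PFacts

lemma getD_map_indexOf (w out : List ℕ) {m : ℕ} (hm : m < w.length) :
    (w.map fun x => out.idxOf x).getD m 0 = out.idxOf (w.getD m 0) := by
  rw [List.getD_eq_getElem _ _ (by simpa using hm), List.getElem_map,
    List.getD_eq_getElem _ _ hm]

lemma avoids231_map_indexOf : ∀ n (w out : List ℕ), w.length ≤ n → IsStackOutput w out →
    SortedWordSock out → Avoids231 (w.map fun x => out.idxOf x) := by
  intro n
  induction n with
  | zero =>
      intro w out hlen _ _
      have : w = [] := List.eq_nil_of_length_eq_zero (Nat.le_zero.mp hlen)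
      subst this
      rintro ⟨i, j, k, hij, hjk, hk, -, -⟩
      simp at hk
  | succ n ih =>
      intro w out hlen hrun hsort
      cases w with
      | nil =>
          rintro ⟨i, j, k, hij, hjk, hk, -, -⟩
          simp at hk
      | cons a w' =>
          obtain ⟨u, v, ou, ov, hsplit, rfl, hu, hv⟩ := isStackOutput_cons.mp hrun
          have hpu := isStackOutput_perm u.length u ou le_rfl hu
          have hpv := isStackOutput_perm v.length v ov le_rfl hv
          have hsortu : SortedWordSock ou := sortedWordSock_prefix hsort
          have hsortv : SortedWordSock ov := by
            have hsort' : SortedWordSock ((ou ++ [a]) ++ ov) := by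
              rw [List.append_assoc]; simpa using hsort
            exact sortedWordSock_suffix hsort'
          simp only [List.length_cons] at hlen
          have hlsp := congrArg List.length hsplit
          simp only [List.length_append] at hlsp
          have IHu := ih u ou (by omega) hu hsortu
          have IHv := ih v ov (by omega) hv hsortv
          subst hsplit
          rintro ⟨i, j, k, hij, hjk, hk, h1, h2⟩
          simp only [List.length_map, List.length_cons, List.length_append] at hk
          have hklen : k < (a :: (u ++ v)).length := by simp; omega
          have hilen : i < (a :: (u ++ v)).length := by simp; omega
          have hjlen : j < (a :: (u ++ v)).length := by simp; omega
          rw [getD_map_indexOf _ _ hklen, getD_map_indexOf _ _ hilen] at h1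
          rw [getD_map_indexOf _ _ hilen, getD_map_indexOf _ _ hjlen] at h2
          have hgW0 : (a :: (u ++ v)).getD 0 0 = a := rfl
          have hgWu : ∀ m, 1 ≤ m → m ≤ u.length →
              (a :: (u ++ v)).getD m 0 = u.getD (m - 1) 0 ∧ (a :: (u ++ v)).getD m 0 ∈ u := by
            intro m h1m h2m
            obtain ⟨m', rfl⟩ : ∃ m', m = m' + 1 := ⟨m - 1, by omega⟩
            have e : (a :: (u ++ v)).getD (m' + 1) 0 = u.getD m' 0 := by
              rw [List.getD_cons_succ, List.getD_append _ _ _ _ (by omega)]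
            refine ⟨by simpa using e, ?_⟩
            rw [e, List.getD_eq_getElem _ _ (by omega)]
            exact List.getElem_mem _
          have hgWv : ∀ m, u.length < m → m < 1 + u.length + v.length →
              (a :: (u ++ v)).getD m 0 = v.getD (m - 1 - u.length) 0 ∧
                (a :: (u ++ v)).getD m 0 ∈ v := by
            intro m h1m h2m
            obtain ⟨m', rfl⟩ : ∃ m', m = m' + 1 := ⟨m - 1, by omega⟩
            have e : (a :: (u ++ v)).getD (m' + 1) 0 = v.getD (m' - u.length) 0 := by
              rw [List.getD_cons_succ, List.getD_append_right _ _ _ _ (by omega)]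
            refine ⟨by simpa using e, ?_⟩
            rw [e, List.getD_eq_getElem _ _ (by omega)]
            exact List.getElem_mem _
          -- abbreviations
          set W := a :: (u ++ v) with hW
          set xi := W.getD i 0 with hxi
          set xj := W.getD j 0 with hxj
          set xk := W.getD k 0 with hxk
          have hfle : ∀ x ∈ ou, (ou ++ a :: ov).idxOf x ≤ (ou ++ a :: ov).idxOf a := by
            intro x hx
            by_cases hxa : x = a
            · subst hxa; exact le_rfl
            · exact le_of_lt (fact_P4 hsort hx hxa)
          have hfge : ∀ x ∈ ov, (ou ++ a :: ov).idxOf a ≤ (ou ++ a :: ov).idxOf x := by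
            intro x hx
            by_cases hxa : x = a
            · subst hxa; exact le_rfl
            · exact le_of_lt (fact_P3 hsort hx hxa)
          rcases Nat.eq_zero_or_pos i with rfl | hipos
          · -- i = 0, xi = a
            rw [hxi, hgW0] at h1 h2
            by_cases hj : j ≤ u.length
            · have hmem := (hgWu j (by omega) hj).2
              have : xj ∈ ou := hpu.mem_iff.mp hmem
              exact absurd h2 (not_lt.mpr (hfle _ this))
            · have hmem := (hgWv k (by omega) (by omega)).2
              have : xk ∈ ov := hpv.mem_iff.mp hmem
              exact absurd h1 (not_lt.mpr (hfge _ this))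
          · by_cases hiu : i ≤ u.length
            · have hxiu : xi ∈ ou := hpu.mem_iff.mp (hgWu i (by omega) hiu).2
              by_cases hku : k ≤ u.length
              · -- all in u region
                have hxju : xj ∈ ou := hpu.mem_iff.mp (hgWu j (by omega) (by omega)).2
                have hxku : xk ∈ ou := hpu.mem_iff.mp (hgWu k (by omega) hku).2
                apply IHu
                refine ⟨i - 1, j - 1, k - 1, by omega, by omega, by simp; omega, ?_, ?_⟩
                · rw [getD_map_indexOf _ _ (by omega), getD_map_indexOf _ _ (by omega),
                    ← (hgWu k (by omega) hku).1, ← (hgWu i (by omega) hiu).1,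
                    ← (fact_P1 (a := a) (ov := ov) hxku).1,
                    ← (fact_P1 (a := a) (ov := ov) hxiu).1]
                  exact h1
                · rw [getD_map_indexOf _ _ (by omega), getD_map_indexOf _ _ (by omega),
                    ← (hgWu j (by omega) (by omega)).1, ← (hgWu i (by omega) hiu).1,
                    ← (fact_P1 (a := a) (ov := ov) hxju).1,
                    ← (fact_P1 (a := a) (ov := ov) hxiu).1]
                  exact h2
              · have hxkv : xk ∈ ov := hpv.mem_iff.mp (hgWv k (by omega) (by omega)).2
                have g1 : (ou ++ a :: ov).idxOf xi ≤ (ou ++ a :: ov).idxOf a :=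
                  hfle _ hxiu
                have g2 : (ou ++ a :: ov).idxOf a ≤ (ou ++ a :: ov).idxOf xk :=
                  hfge _ hxkv
                omega
            · -- i, j, k in v region
              have hxiv : xi ∈ ov := hpv.mem_iff.mp (hgWv i (by omega) (by omega)).2
              have hxjv : xj ∈ ov := hpv.mem_iff.mp (hgWv j (by omega) (by omega)).2
              have hxkv : xk ∈ ov := hpv.mem_iff.mp (hgWv k (by omega) (by omega)).2
              apply IHv
              refine ⟨i - 1 - u.length, j - 1 - u.length, k - 1 - u.length,
                by omega, by omega, by simp; omega, ?_, ?_⟩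
              · rw [getD_map_indexOf _ _ (by omega), getD_map_indexOf _ _ (by omega),
                  ← (hgWv k (by omega) (by omega)).1, ← (hgWv i (by omega) (by omega)).1]
                exact (fact_P5 hsort hxkv hxiv).mp h1
              · rw [getD_map_indexOf _ _ (by omega), getD_map_indexOf _ _ (by omega),
                  ← (hgWv j (by omega) (by omega)).1, ← (hgWv i (by omega) (by omega)).1]
                exact (fact_P5 hsort hxiv hxjv).mp h2


lemma sockEquiv_map_indexOf {w out : List ℕ} (hmem : ∀ x ∈ w, x ∈ out) :
    SockEquiv (w.map fun x => out.idxOf x) w := by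
  refine ⟨by simp, ?_⟩
  intro i j hi hj
  simp only [List.length_map] at hi hj
  rw [getD_map_indexOf _ _ hi, getD_map_indexOf _ _ hj]
  have hwi : w.getD i 0 ∈ w := by
    rw [List.getD_eq_getElem _ _ hi]; exact List.getElem_mem _
  have hwj : w.getD j 0 ∈ w := by
    rw [List.getD_eq_getElem _ _ hj]; exact List.getElem_mem _
  constructor
  · intro h
    rw [← getD_indexOf (hmem _ hwi), ← getD_indexOf (hmem _ hwj), h]
  · intro h
    rw [h]

lemma sortedWordSock_of_sockEquiv {s t : List ℕ} (he : SockEquiv s t)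
    (hs : SortedWordSock s) : SortedWordSock t := by
  intro i j k hij hjk hk heq
  obtain ⟨hlen, hiff⟩ := he
  rw [← hiff i k (by omega) (by omega)] at heq
  rw [← hiff i j (by omega) (by omega)]
  exact hs i j k hij hjk (by omega) heq

lemma sortedWordSock_of_sorted {s : List ℕ} (hs : List.Pairwise (· ≤ ·) s) :
    SortedWordSock s := by
  intro i j k hij hjk hk heq
  have hp := List.pairwise_iff_getElem.mp hs
  have hi' : i < s.length := by omega
  have hj' : j < s.length := by omega
  have h1 : s.getD i 0 ≤ s.getD j 0 := by
    rw [List.getD_eq_getElem _ _ hi', List.getD_eq_getElem _ _ hj']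
    exact hp i j hi' hj' hij
  have h2 : s.getD j 0 ≤ s.getD k 0 := by
    rw [List.getD_eq_getElem _ _ hj', List.getD_eq_getElem _ _ hk]
    exact hp j k hj' hk hjk
  omega

/-- a sock ordering is foot-sortable iff some word representing it avoids 231. -/
theorem footSortable_iff_exists_231_avoiding_word (ρ : SockOrdering) :
    FootSortable 1 ρ ↔ ∃ w : List ℕ, (⟦w⟧ : SockOrdering) = ρ ∧ Avoids231 w := by
  constructor
  · rintro ⟨κ, hκ, hsorted⟩
    have hκ' : κ ∈ ⋃ κ' ∈ footIter 0 ρ, foot κ' := hκ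
    rw [Set.mem_iUnion₂] at hκ'
    obtain ⟨κ', hκ'', hfoot⟩ := hκ'
    have : κ' = ρ := hκ''
    subst this
    obtain ⟨w, out, hwρ, hrun, hout⟩ := hfoot
    obtain ⟨s, hs, hsw⟩ := hsorted
    have hse : SockEquiv s out := Quotient.exact (hs.trans hout.symm)
    have hperm := isStackOutput_perm w.length w out le_rfl hrun
    have hsout : SortedWordSock out := sortedWordSock_of_sockEquiv hse hsw
    refine ⟨w.map fun x => out.idxOf x, ?_, ?_⟩
    · rw [← hwρ]
      exact Quotient.sound (sockEquiv_map_indexOf fun x hx => hperm.subset hx)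
    · exact avoids231_map_indexOf w.length w out le_rfl hrun hsout
  · rintro ⟨w, hwρ, hav⟩
    obtain ⟨out, hrun, hsorted⟩ := exists_sorted_stack_output w.length w le_rfl hav
    refine ⟨⟦out⟧, ?_, ⟨out, rfl, sortedWordSock_of_sorted hsorted⟩⟩
    have : (⟦out⟧ : SockOrdering) ∈ ⋃ κ' ∈ footIter 0 ρ, foot κ' := by
      exact Set.mem_iUnion₂.mpr ⟨ρ, rfl, ⟨w, out, hwρ, hrun, rfl⟩⟩
    exact this
end

section
/- For every integer n ≥ 1, every sock ordering with n colors is ⌈log₂(n)⌉-foot-sortable. -/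
/- ## Auxiliary machinery -/

lemma stackStep_ctx {a b : List ℕ × List ℕ × List ℕ} (x p : List ℕ) (h : StackStep a b) :
    StackStep (a.1 ++ x, a.2.1, p ++ a.2.2) (b.1 ++ x, b.2.1, p ++ b.2.2) := by
  cases h with
  | push c inp st out => exact StackStep.push c (inp ++ x) st (p ++ out)
  | pop c inp st out =>
      simpa [List.append_assoc] using StackStep.pop c (inp ++ x) st (p ++ out)

lemma isStackOutput_append {w1 o1 w2 o2 : List ℕ}
    (h1 : IsStackOutput w1 o1) (h2 : IsStackOutput w2 o2) :
    IsStackOutput (w1 ++ w2) (o1 ++ o2) := by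
  have H1 : Relation.ReflTransGen StackStep _ _ := Relation.ReflTransGen.lift
    (fun s : List ℕ × List ℕ × List ℕ => (s.1 ++ w2, s.2.1, ([] : List ℕ) ++ s.2.2))
    (fun a b h => stackStep_ctx w2 [] h) _ _ h1
  have H2 : Relation.ReflTransGen StackStep _ _ := Relation.ReflTransGen.lift
    (fun s : List ℕ × List ℕ × List ℕ => (s.1 ++ ([] : List ℕ), s.2.1, o1 ++ s.2.2))
    (fun a b h => stackStep_ctx [] o1 h) _ _ h2
  simp only [List.nil_append, List.append_nil] at H1 H2
  exact H1.trans H2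

lemma pass_aux (p : ℕ → Bool) : ∀ (w st out : List ℕ),
    Relation.ReflTransGen StackStep (w, st, out)
      ([], (w.filter fun a => !p a).reverse ++ st, out ++ w.filter p)
  | [], st, out => by simp only [List.filter_nil, List.reverse_nil, List.nil_append,
      List.append_nil]; exact Relation.ReflTransGen.refl
  | a :: w, st, out => by
    by_cases h : p a = true
    · refine Relation.ReflTransGen.head (StackStep.push a w st out)
        (Relation.ReflTransGen.head (StackStep.pop a w st out) ?_)
      simpa [List.filter_cons, h, List.append_assoc] using pass_aux p w st (out ++ [a])
    · refine Relation.ReflTransGen.head (StackStep.push a w st out) ?_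
      simpa [List.filter_cons, h] using pass_aux p w (a :: st) out

lemma pop_all : ∀ (st out : List ℕ),
    Relation.ReflTransGen StackStep (([] : List ℕ), st, out) ([], [], out ++ st)
  | [], out => by simp only [List.append_nil]; exact Relation.ReflTransGen.refl
  | a :: st, out => Relation.ReflTransGen.head (StackStep.pop a [] st out)
      (by simpa [List.append_assoc] using pop_all st (out ++ [a]))

lemma isStackOutput_filter (p : ℕ → Bool) (w : List ℕ) :
    IsStackOutput w (w.filter p ++ (w.filter fun a => !p a).reverse) :=
  Relation.ReflTransGen.trans (by simpa using pass_aux p w [] [])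
    (pop_all ((w.filter fun a => !p a).reverse) (w.filter p))

/-- Chains of stack passes on words. -/
def IterOut : ℕ → List ℕ → List ℕ → Prop
  | 0, w, v => v = w
  | t + 1, w, v => ∃ u, IsStackOutput w u ∧ IterOut t u v

lemma footIter_head {ρ κ : SockOrdering} (h1 : κ ∈ foot ρ) :
    ∀ t (μ : SockOrdering), μ ∈ footIter t κ → μ ∈ footIter (t + 1) ρ := by
  intro t
  induction t with
  | zero =>
      intro μ h2
      simp only [footIter, Set.mem_singleton_iff] at h2
      subst h2
      simp only [footIter, Set.mem_iUnion, Set.mem_singleton_iff]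
      exact ⟨ρ, ⟨rfl, h1⟩⟩
  | succ t ih =>
      intro μ h2
      rw [show footIter (t + 1) κ = ⋃ ν ∈ footIter t κ, foot ν from rfl] at h2
      rw [show footIter (t + 1 + 1) ρ = ⋃ ν ∈ footIter (t + 1) ρ, foot ν from rfl]
      simp only [Set.mem_iUnion] at h2 ⊢
      obtain ⟨ν, hν, hμ⟩ := h2
      exact ⟨ν, ih ν hν, hμ⟩

lemma mem_footIter_of_iterOut : ∀ (t : ℕ) {w v : List ℕ}, IterOut t w v →
    (⟦v⟧ : SockOrdering) ∈ footIter t (⟦w⟧ : SockOrdering)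
  | 0, w, v, h => by
      subst h; simp [footIter]; exact rfl
  | t + 1, w, v, ⟨u, hu, hv⟩ =>
      footIter_head ⟨w, u, rfl, hu, rfl⟩ t _ (mem_footIter_of_iterOut t hv)

lemma sortedWordSock_of_card_le_one {b : List ℕ} (h : b.toFinset.card ≤ 1) :
    SortedWordSock b := by
  intro i j k hij hjk hk _
  have hi : i < b.length := by omega
  have hj : j < b.length := by omega
  rw [List.getD_eq_getElem _ _ hi, List.getD_eq_getElem _ _ hj]
  exact Finset.card_le_one.mp h _ (by simp) _ (by simp)

lemma getD_mem_toFinset {x : List ℕ} {i : ℕ} (hi : i < x.length) :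
    x.getD i 0 ∈ x.toFinset := by
  rw [List.getD_eq_getElem _ _ hi]
  simp

lemma sortedWordSock_append {x y : List ℕ} (hx : SortedWordSock x) (hy : SortedWordSock y)
    (hd : Disjoint x.toFinset y.toFinset) : SortedWordSock (x ++ y) := by
  intro i j k hij hjk hk hik
  rw [List.length_append] at hk
  by_cases hkx : k < x.length
  · rw [List.getD_append _ _ _ _ (by omega : i < x.length),
      List.getD_append _ _ _ _ (by omega : j < x.length)]
    rw [List.getD_append _ _ _ _ (by omega : i < x.length),
      List.getD_append _ _ _ _ hkx] at hik
    exact hx i j k hij hjk hkx hik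
  · by_cases hix : i < x.length
    · exfalso
      rw [List.getD_append _ _ _ _ hix,
        List.getD_append_right _ _ _ _ (by omega : x.length ≤ k)] at hik
      have h1 : x.getD i 0 ∈ x.toFinset := getD_mem_toFinset hix
      have h2 : y.getD (k - x.length) 0 ∈ y.toFinset := getD_mem_toFinset (by omega)
      rw [hik] at h1
      exact (Finset.disjoint_left.mp hd h1) h2
    · rw [List.getD_append_right _ _ _ _ (by omega : x.length ≤ i),
        List.getD_append_right _ _ _ _ (by omega : x.length ≤ j)]
      rw [List.getD_append_right _ _ _ _ (by omega : x.length ≤ i),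
        List.getD_append_right _ _ _ _ (by omega : x.length ≤ k)] at hik
      exact hy _ _ _ (by omega) (by omega) (by omega) hik

lemma disjoint_toFinset_flatten {b : List ℕ} {ws : List (List ℕ)}
    (h : ∀ c ∈ ws, Disjoint b.toFinset c.toFinset) :
    Disjoint b.toFinset ws.flatten.toFinset := by
  rw [Finset.disjoint_left]
  intro x hx hx'
  rw [List.mem_toFinset, List.mem_flatten] at hx'
  obtain ⟨l, hl, hxl⟩ := hx'
  exact Finset.disjoint_left.mp (h l hl) hx (List.mem_toFinset.mpr hxl)

lemma sortedWordSock_flatten : ∀ (ws : List (List ℕ)),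
    (∀ b ∈ ws, SortedWordSock b) →
    ws.Pairwise (fun a b => Disjoint a.toFinset b.toFinset) →
    SortedWordSock ws.flatten
  | [], _, _ => by intro i j k _ _ hk; simp at hk
  | b :: ws, hs, hp => by
      rw [List.flatten_cons]
      exact sortedWordSock_append (hs b (by simp))
        (sortedWordSock_flatten ws (fun c hc => hs c (by simp [hc])) hp.of_cons)
        (disjoint_toFinset_flatten (List.pairwise_cons.mp hp).1)

lemma exists_split (S : Finset ℕ) (m : ℕ) (h : S.card ≤ 2 * m) :
    ∃ A ⊆ S, A.card ≤ m ∧ (S \ A).card ≤ m := by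
  obtain ⟨A, hAS, hA⟩ := Finset.exists_subset_card_eq (min_le_left S.card m)
  refine ⟨A, hAS, hA ▸ min_le_right _ _, ?_⟩
  rw [Finset.card_sdiff_of_subset hAS, hA]
  omega

lemma onePass (m : ℕ) : ∀ (ws : List (List ℕ)),
    (∀ b ∈ ws, b.toFinset.card ≤ 2 * m) →
    ws.Pairwise (fun a b => Disjoint a.toFinset b.toFinset) →
    ∃ ws' : List (List ℕ), IsStackOutput ws.flatten ws'.flatten ∧
      (∀ b ∈ ws', b.toFinset.card ≤ m) ∧
      ws'.Pairwise (fun a b => Disjoint a.toFinset b.toFinset) ∧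
      (ws'.flatten).toFinset ⊆ (ws.flatten).toFinset
  | [], _, _ => ⟨[], Relation.ReflTransGen.refl, by simp, by simp, by simp⟩
  | b :: ws, hc, hp => by
      obtain ⟨A, hAS, hA1, hA2⟩ := exists_split b.toFinset m (hc b (by simp))
      set p : ℕ → Bool := fun a => decide (a ∈ A) with hpdef
      set x1 : List ℕ := b.filter p with hx1
      set x2 : List ℕ := (b.filter fun a => !p a).reverse with hx2
      obtain ⟨ws', h1, h2, h3, h4⟩ := onePass m ws (fun c hc' => hc c (by simp [hc'])) hp.of_cons
      have hx1A : x1.toFinset ⊆ A := by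
        intro a ha
        rw [hx1, List.mem_toFinset, List.mem_filter] at ha
        simpa [hpdef] using ha.2
      have hx2A : x2.toFinset ⊆ b.toFinset \ A := by
        intro a ha
        rw [hx2, List.mem_toFinset, List.mem_reverse, List.mem_filter] at ha
        simp only [hpdef, Bool.not_eq_true', decide_eq_false_iff_not] at ha
        exact Finset.mem_sdiff.mpr ⟨List.mem_toFinset.mpr ha.1, ha.2⟩
      have hx1b : x1.toFinset ⊆ b.toFinset := hx1A.trans hAS
      have hx2b : x2.toFinset ⊆ b.toFinset := hx2A.trans (Finset.sdiff_subset)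
      have hbdisj : ∀ c ∈ ws', Disjoint b.toFinset c.toFinset := by
        intro c hcmem
        have hsub : c.toFinset ⊆ ws'.flatten.toFinset := by
          intro a ha
          rw [List.mem_toFinset] at ha ⊢
          exact List.mem_flatten.mpr ⟨c, hcmem, ha⟩
        exact ((disjoint_toFinset_flatten (List.pairwise_cons.mp hp).1).mono_right (hsub.trans h4))
      refine ⟨x1 :: x2 :: ws', ?_, ?_, ?_, ?_⟩
      · have := isStackOutput_append (isStackOutput_filter p b) h1
        simpa [List.append_assoc] using this
      · rintro c hcmem
        simp only [List.mem_cons] at hcmem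
        rcases hcmem with rfl | rfl | hcmem
        · exact le_trans (Finset.card_le_card hx1A) hA1
        · exact le_trans (Finset.card_le_card hx2A) hA2
        · exact h2 c hcmem
      · refine List.pairwise_cons.mpr ⟨?_, List.pairwise_cons.mpr ⟨?_, h3⟩⟩
        · intro c hcmem
          simp only [List.mem_cons] at hcmem
          rcases hcmem with rfl | hcmem
          · exact Finset.disjoint_left.mpr fun a ha ha' =>
              (Finset.mem_sdiff.mp (hx2A ha')).2 (hx1A ha)
          · exact ((hbdisj c hcmem).mono_left hx1b)
        · intro c hcmem
          exact ((hbdisj c hcmem).mono_left hx2b)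
      · intro a ha
        simp only [List.flatten_cons, List.toFinset_append, Finset.mem_union] at ha ⊢
        rcases ha with ha | ha | ha
        · exact Or.inl (hx1b ha)
        · exact Or.inl (hx2b ha)
        · exact Or.inr (h4 ha)

lemma sock_main : ∀ (t : ℕ) (ws : List (List ℕ)),
    (∀ b ∈ ws, b.toFinset.card ≤ 2 ^ t) →
    ws.Pairwise (fun a b => Disjoint a.toFinset b.toFinset) →
    ∃ v, IterOut t ws.flatten v ∧ SortedWordSock v
  | 0, ws, hc, hp =>
      ⟨ws.flatten, rfl, sortedWordSock_flatten ws
        (fun b hb => sortedWordSock_of_card_le_one (by simpa using hc b hb)) hp⟩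
  | t + 1, ws, hc, hp => by
      obtain ⟨ws', h1, h2, h3, _⟩ := onePass (2 ^ t) ws
        (fun b hb => by have := hc b hb; rw [pow_succ] at this; omega) hp
      obtain ⟨v, hv, hs⟩ := sock_main t ws' h2 h3
      exact ⟨v, ⟨ws'.flatten, h1, hv⟩, hs⟩

/-- every sock ordering with `n` colors is `⌈log₂ n⌉`-foot-sortable. -/
theorem footSortable_of_clog_feet (n : ℕ) (hn : 1 ≤ n) (ρ : SockOrdering)
    (h : HasColors ρ n) : FootSortable (Nat.clog 2 n) ρ := by
  obtain ⟨w, hw, hcard⟩ := h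
  obtain ⟨v, hv, hs⟩ := sock_main (Nat.clog 2 n) [w]
    (by
      intro b hb
      simp only [List.mem_singleton] at hb
      subst hb
      rw [hcard]
      exact Nat.le_pow_clog (by norm_num) n)
    (by simp)
  simp only [List.flatten_cons, List.flatten_nil, List.append_nil] at hv
  refine ⟨⟦v⟧, ?_, ⟨v, rfl, hs⟩⟩
  have := mem_footIter_of_iterOut _ hv
  rwa [hw] at this
end

section
/- For every integer n ≥ 2, there exists a sock ordering with n colors that is not (⌈log₂(n)⌉ − 1)-foot-sortable. -/
-- ===== Auxiliary development for STATEMENT 4 =====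

def StratLike (k R : ℕ) (u : List ℕ) : Prop :=
  u.length = R * k ∧
  (∀ a b, a < u.length → b < u.length → a / k = b / k → a ≠ b → u.getD a 0 ≠ u.getD b 0) ∧
  (∀ a b, a < u.length → b < u.length → ∃ c, c < u.length ∧ c / k = a / k ∧
    u.getD c 0 = u.getD b 0)


/-- Recursive characterization of one-stack rearrangements. -/
inductive SR : List ℕ → List ℕ → Prop
  | nil : SR [] []
  | cons (f : ℕ) {X Y A B : List ℕ} : SR X A → SR Y B → SR (f :: (X ++ Y)) (A ++ f :: B)

/-- Stack machine state semantics: input, stack, future output. -/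
inductive SRS : List ℕ → List ℕ → List ℕ → Prop
  | base {X A : List ℕ} : SR X A → SRS X [] A
  | step (s : ℕ) {X A rest st fut : List ℕ} :
      SR X A → SRS rest st fut → SRS (X ++ rest) (s :: st) (A ++ s :: fut)

lemma srs_step_back {p q : List ℕ × List ℕ × List ℕ} (h : StackStep p q) {f : List ℕ}
    (hq : SRS q.1 q.2.1 f) : ∃ f', SRS p.1 p.2.1 f' ∧ p.2.2 ++ f' = q.2.2 ++ f := by
  cases h with
  | push a inp st out =>
    simp only at hq ⊢
    refine ⟨f, ?_, rfl⟩
    cases hq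
    rename_i X A rest fut hXA hrest
    cases hrest with
    | base hr =>
      exact SRS.base (SR.cons a hXA hr)
    | step s2 hX2 hrest2 =>
      rename_i X₂ A₂ rest₂ st₂ fut₂
      have h1 : SR (a :: (X ++ X₂)) (A ++ a :: A₂) := SR.cons a hXA hX2
      have := SRS.step s2 h1 hrest2
      simpa using this
  | pop a inp st out =>
    simp only at hq ⊢
    refine ⟨a :: f, ?_, by simp⟩
    have := SRS.step a SR.nil hq
    simpa using this

lemma sr_of_isStackOutput {w out : List ℕ} (h : IsStackOutput w out) : SR w out := by
  have key : ∀ p : List ℕ × List ℕ × List ℕ,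
      Relation.ReflTransGen StackStep p ([], [], out) →
      ∃ f, SRS p.1 p.2.1 f ∧ p.2.2 ++ f = out := by
    intro p hp
    induction hp using Relation.ReflTransGen.head_induction_on with
    | refl => exact ⟨[], SRS.base SR.nil, by simp⟩
    | head hstep _ ih =>
      obtain ⟨f, hf, hfe⟩ := ih
      obtain ⟨f', hf', hfe'⟩ := srs_step_back hstep hf
      exact ⟨f', hf', by rw [hfe']; rw [← hfe]⟩
  obtain ⟨f, hf, hfe⟩ := key (w, [], []) h
  simp only at hf hfe
  subst hfe
  cases hf with
  | base h => simpa using h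

lemma SR.append {X A Y B : List ℕ} (h1 : SR X A) (h2 : SR Y B) : SR (X ++ Y) (A ++ B) := by
  induction h1 generalizing Y B with
  | nil => simpa
  | cons f hX hY ihX ihY =>
    rename_i X₁ Y₁ A₁ B₁
    have := SR.cons f hX (ihY h2)
    simpa using this

lemma SR.sublist {w v : List ℕ} (h : SR w v) : ∀ u, u.Sublist w → ∃ z, z.Sublist v ∧ SR u z := by
  induction h with
  | nil => exact fun u hu => ⟨[], by simp, by simpa using (List.sublist_nil.mp hu) ▸ SR.nil⟩
  | cons f hX hY ihX ihY =>
    rename_i X Y A B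
    intro u hu
    rcases List.sublist_cons_iff.mp hu with h' | ⟨r, rfl, h'⟩
    · rcases List.sublist_append_iff.mp h' with ⟨uX, uY, rfl, hX', hY'⟩
      obtain ⟨zX, hzX, hSRX⟩ := ihX uX hX'
      obtain ⟨zY, hzY, hSRY⟩ := ihY uY hY'
      exact ⟨zX ++ zY, List.Sublist.append hzX (hzY.trans (List.sublist_cons_self f B)),
        SR.append hSRX hSRY⟩
    · rcases List.sublist_append_iff.mp h' with ⟨uX, uY, rfl, hX', hY'⟩
      obtain ⟨zX, hzX, hSRX⟩ := ihX uX hX'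
      obtain ⟨zY, hzY, hSRY⟩ := ihY uY hY'
      exact ⟨zX ++ f :: zY, List.Sublist.append hzX (hzY.cons₂ f), SR.cons f hSRX hSRY⟩


/-- A map that sends input positions to output positions, respecting letters,
injective, and satisfying the stack LIFO law. -/
def GoodMap (u v : List ℕ) (O : ℕ → ℕ) : Prop :=
  u.length = v.length ∧
  (∀ x, x < u.length → O x < u.length) ∧
  (∀ x, x < u.length → v.getD (O x) 0 = u.getD x 0) ∧
  (∀ x y, x < u.length → y < u.length → x ≠ y → O x ≠ O y) ∧
  (∀ x y z, x < y → y < z → z < u.length → O z < O x → O z < O y → O y < O x)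

lemma sr_goodMap {u v : List ℕ} (h : SR u v) : ∃ O, GoodMap u v O := by
  induction h with
  | nil => exact ⟨id, by simp [GoodMap]⟩
  | cons f hX hY ihX ihY =>
    rename_i X Y A B
    obtain ⟨OX, hlX, hbX, hvX, hiX, hlawX⟩ := ihX
    obtain ⟨OY, hlY, hbY, hvY, hiY, hlawY⟩ := ihY
    set n₁ : ℕ := X.length with hn₁
    set O : ℕ → ℕ := fun x => if x = 0 then n₁ else if x < n₁ + 1 then OX (x - 1)
      else n₁ + 1 + OY (x - (n₁ + 1)) with hO
    have hAX : A.length = n₁ := hlX.symm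
    have hO0 : O 0 = n₁ := by simp [hO]
    have hOXe : ∀ x, x ≠ 0 → x < n₁ + 1 → O x = OX (x - 1) := by
      intro x h1 h2; simp only [hO, h1, h2, ↓reduceIte]
    have hOYe : ∀ x, ¬ x < n₁ + 1 → O x = n₁ + 1 + OY (x - (n₁ + 1)) := by
      intro x h2; have hx0 : x ≠ 0 := by omega
      simp only [hO, h2, hx0, ↓reduceIte]
    have hlen : (f :: (X ++ Y)).length = n₁ + 1 + Y.length := by simp; omega
    -- range facts
    have hrX : ∀ x, x ≠ 0 → x < n₁ + 1 → O x < n₁ := by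
      intro x h1 h2; rw [hOXe x h1 h2]; exact hbX _ (by omega)
    have hrY : ∀ x, ¬ x < n₁ + 1 → x < n₁ + 1 + Y.length → n₁ < O x ∧ O x < n₁ + 1 + Y.length := by
      intro x h1 h2; rw [hOYe x h1]
      have := hbY (x - (n₁+1)) (by omega)
      omega
    have hval : ∀ x, x < n₁ + 1 + Y.length →
        (x = 0 ∧ O x = n₁) ∨ (x ≠ 0 ∧ x < n₁ + 1 ∧ O x < n₁) ∨
        (¬ x < n₁ + 1 ∧ n₁ < O x ∧ O x < n₁ + 1 + Y.length) := by
      intro x hx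
      by_cases h0 : x = 0
      · exact Or.inl ⟨h0, h0 ▸ hO0⟩
      · by_cases h1 : x < n₁ + 1
        · exact Or.inr (Or.inl ⟨h0, h1, hrX x h0 h1⟩)
        · exact Or.inr (Or.inr ⟨h1, hrY x h1 hx⟩)
    refine ⟨O, ?_, ?_, ?_, ?_, ?_⟩
    · simp; omega
    · intro x hx
      rw [hlen] at hx
      by_cases h0 : x = 0
      · rw [h0, hO0]; simp; omega
      · by_cases h1 : x < n₁ + 1
        · have := hrX x h0 h1; simp; omega
        · have := hrY x h1 hx; simp; omega
    · intro x hx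
      rw [hlen] at hx
      by_cases h0 : x = 0
      · rw [h0, hO0]
        rw [List.getD_append_right _ _ _ _ (by omega)]
        rw [hAX]
        simp
      · have hx' : (f :: (X ++ Y)).getD x 0 = (X ++ Y).getD (x - 1) 0 := by
          rcases Nat.exists_eq_succ_of_ne_zero h0 with ⟨y, rfl⟩; simp
        rw [hx']
        by_cases h1 : x < n₁ + 1
        · rw [hOXe x h0 h1]
          have hb := hbX (x-1) (by omega)
          rw [List.getD_append _ _ _ _ (by omega), List.getD_append _ _ _ _ (by omega)]
          exact hvX _ (by omega)
        · rw [hOYe x h1]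
          have hb := hbY (x - (n₁+1)) (by omega)
          rw [List.getD_append_right _ _ _ _ (by omega : A.length ≤ n₁ + 1 + OY (x - (n₁+1))),
            List.getD_append_right _ _ _ _ (by omega : X.length ≤ x - 1)]
          have e1 : n₁ + 1 + OY (x - (n₁ + 1)) - A.length = OY (x - (n₁+1)) + 1 := by omega
          have e2 : x - 1 - X.length = x - (n₁ + 1) := by omega
          rw [e1, e2]
          simpa using hvY _ (by omega)
    · intro x y hx hy hxy hc
      rw [hlen] at hx hy
      rcases hval x hx with ⟨hx0, hxv⟩ | ⟨hx0, hx1, hxv⟩ | ⟨hx1, hxv, hxv2⟩ <;>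
        rcases hval y hy with ⟨hy0, hyv⟩ | ⟨hy0, hy1, hyv⟩ | ⟨hy1, hyv, hyv2⟩
      all_goals
        first
        | omega
        | (rw [hOXe x hx0 hx1, hOXe y hy0 hy1] at hc
           exact hiX (x-1) (y-1) (by omega) (by omega) (by omega) hc)
        | (rw [hOYe x hx1, hOYe y hy1] at hc
           exact hiY (x - (n₁+1)) (y - (n₁+1)) (by omega) (by omega) (by omega) (by omega))
    · intro x y z hxy hyz hz hzx hzy
      rw [hlen] at hz
      by_cases hx0 : x = 0
      · subst hx0
        rw [hO0] at hzx
        have hz1 : z < n₁ + 1 := by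
          by_contra hc
          have := hrY z hc hz; omega
        have hy1 : y < n₁ + 1 := by omega
        rw [hO0]
        exact hrX y (by omega) hy1
      · by_cases hx1 : x < n₁ + 1
        · have hbx := hrX x hx0 hx1
          have hz1 : z < n₁ + 1 := by
            by_contra hc
            have := hrY z hc hz; omega
          have hy1 : y < n₁ + 1 := by omega
          rw [hOXe x hx0 hx1] at hzx ⊢
          rw [hOXe z (by omega) hz1] at hzx hzy
          rw [hOXe y (by omega) hy1] at hzy ⊢
          exact hlawX (x-1) (y-1) (z-1) (by omega) (by omega) (by omega) hzx hzy
        · have hy1 : ¬ y < n₁ + 1 := by omega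
          have hz1 : ¬ z < n₁ + 1 := by omega
          rw [hOYe x hx1] at hzx ⊢
          rw [hOYe z hz1] at hzx hzy
          rw [hOYe y hy1] at hzy ⊢
          have := hlawY (x - (n₁+1)) (y - (n₁+1)) (z - (n₁+1))
            (by omega) (by omega) (by omega) (by omega) (by omega)
          omega


lemma idx_of_sublist {α : Type*} (d : α) {u w : List α} (h : u.Sublist w) :
    ∃ is : List ℕ, is.Pairwise (· < ·) ∧ (∀ a ∈ is, a < w.length) ∧
      u = is.map (fun a => w.getD a d) := by
  induction h with
  | slnil => exact ⟨[], by simp⟩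
  | cons a h ih =>
    obtain ⟨is, hp, hb, he⟩ := ih
    rename_i l₁ l₂
    refine ⟨is.map (· + 1), ?_, ?_, ?_⟩
    · exact (List.pairwise_map).mpr (hp.imp (by omega))
    · intro b hb'
      simp only [List.mem_map] at hb'
      obtain ⟨c, hc, rfl⟩ := hb'
      have := hb c hc; simp; omega
    · rw [he, List.map_map]
      apply List.map_congr_left
      intro b _; simp
  | cons_cons a h ih =>
    obtain ⟨is, hp, hb, he⟩ := ih
    rename_i l₁ l₂
    refine ⟨0 :: is.map (· + 1), ?_, ?_, ?_⟩
    · rw [List.pairwise_cons]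
      constructor
      · intro b hb'; simp only [List.mem_map] at hb'; obtain ⟨c, _, rfl⟩ := hb'; omega
      · exact (List.pairwise_map).mpr (hp.imp (by omega))
    · intro b hb'
      rcases List.mem_cons.mp hb' with rfl | hb''
      · simp
      · simp only [List.mem_map] at hb''
        obtain ⟨c, hc, rfl⟩ := hb''
        have := hb c hc; simp; omega
    · rw [he, List.map_cons, List.map_map]
      refine congrArg₂ _ (by simp) (List.map_congr_left ?_)
      intro b _; simp

lemma map_getD_sublist {α : Type*} (d : α) :
    ∀ (w : List α) (is : List ℕ), is.Pairwise (· < ·) → (∀ a ∈ is, a < w.length) →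
      (is.map (fun a => w.getD a d)).Sublist w := by
  intro w
  induction w with
  | nil =>
    intro is _ hb
    cases is with
    | nil => simp
    | cons a t => exact absurd (hb a (by simp)) (by simp)
  | cons x w' ih =>
    intro is hp hb
    cases is with
    | nil => simp
    | cons a t =>
      have hp' := List.pairwise_cons.mp hp
      by_cases h0 : a = 0
      · subst h0
        rw [List.map_cons]
        have he : t.map (fun b => (x :: w').getD b d) =
            (t.map (· - 1)).map (fun b => w'.getD b d) := by
          rw [List.map_map]
          apply List.map_congr_left
          intro b hbt
          have h1 : 0 < b := hp'.1 b hbt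
          rcases Nat.exists_eq_succ_of_ne_zero (by omega : b ≠ 0) with ⟨c, rfl⟩
          simp
        rw [he]
        simp only [List.getD_cons_zero]
        apply List.Sublist.cons₂
        apply ih
        · rw [List.pairwise_map]
          apply hp'.2.imp_of_mem
          intro b c hbm _ hbc
          have := hp'.1 b hbm
          omega
        · intro b hbm
          simp only [List.mem_map] at hbm
          obtain ⟨c, hcm, rfl⟩ := hbm
          have h2 := hb c (by simp [hcm])
          have h3 := hp'.1 c hcm
          simp only [List.length_cons] at h2
          omega
      · have hge : ∀ b ∈ a :: t, 0 < b := by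
          intro b hbm
          rcases List.mem_cons.mp hbm with rfl | hbm'
          · omega
          · have := hp'.1 b hbm'; omega
        have he : (a :: t).map (fun b => (x :: w').getD b d) =
            ((a :: t).map (· - 1)).map (fun b => w'.getD b d) := by
          rw [List.map_map]
          apply List.map_congr_left
          intro b hbt
          have h1 : 0 < b := hge b hbt
          rcases Nat.exists_eq_succ_of_ne_zero (by omega : b ≠ 0) with ⟨c, rfl⟩
          simp
        rw [he]
        apply List.Sublist.cons
        apply ih
        · rw [List.pairwise_map]
          apply hp.imp_of_mem
          intro b c hbm _ hbc
          have := hge b hbm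
          omega
        · intro b hbm
          simp only [List.mem_map] at hbm
          obtain ⟨c, hcm, rfl⟩ := hbm
          have h2 := hb c hcm
          have h3 := hge c hcm
          simp only [List.length_cons] at h2
          omega

lemma flatten_length_uniform {α : Type*} (m : ℕ) :
    ∀ (L : List (List α)), (∀ c ∈ L, c.length = m) → L.flatten.length = L.length * m := by
  intro L
  induction L with
  | nil => simp
  | cons c t ih =>
    intro h
    simp only [List.flatten_cons, List.length_append, List.length_cons]
    rw [ih (fun c hc => h c (by simp [hc])), h c (by simp)]
    ring

lemma flatten_getD_uniform {α : Type*} (d : α) (m : ℕ) :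
    ∀ (L : List (List α)) (j i : ℕ), (∀ c ∈ L, c.length = m) → j < L.length → i < m →
      L.flatten.getD (j * m + i) d = (L.getD j []).getD i d := by
  intro L
  induction L with
  | nil => simp
  | cons c t ih =>
    intro j i h hj hi
    cases j with
    | zero =>
      simp only [List.flatten_cons, Nat.zero_mul, Nat.zero_add]
      rw [List.getD_append _ _ _ _ (by rw [h c (by simp)]; omega)]
      simp
    | succ j' =>
      simp only [List.flatten_cons]
      rw [List.getD_append_right _ _ _ _ (by rw [h c (by simp)]; nlinarith [Nat.succ_le_of_lt hj])]
      rw [h c (by simp)]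
      have e : (j' + 1) * m + i - m = j' * m + i := by ring_nf; omega
      rw [e]
      have := ih j' i (fun c hc => h c (by simp [hc])) (by simpa using hj) hi
      simpa using this


lemma interval_dichotomy (l r : ℕ → ℕ) (C : ℕ) :
    ∀ (K : ℕ) (B : Finset ℕ), (∀ b ∈ B, l b ≤ r b) → K * (C + 1) ≤ B.card →
    (∃ t, C + 1 ≤ (B.filter (fun b => l b ≤ t ∧ t ≤ r b)).card) ∨
    (∃ bs : List ℕ, bs.length = K ∧ (∀ b ∈ bs, b ∈ B) ∧
      bs.Pairwise (fun b b' => r b < l b')) := by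
  intro K
  induction K with
  | zero => exact fun B _ _ => Or.inr ⟨[], rfl, by simp, List.Pairwise.nil⟩
  | succ K ih =>
    intro B hlr hcard
    by_cases hfib : ∃ t, C + 1 ≤ (B.filter (fun b => l b ≤ t ∧ t ≤ r b)).card
    · exact Or.inl hfib
    push_neg at hfib
    have hne : B.Nonempty := by
      rw [← Finset.card_pos]
      have : 0 < (K+1) * (C+1) := by positivity
      omega
    obtain ⟨bm, hbm, hmin⟩ := Finset.exists_min_image B r hne
    set Fib := B.filter (fun b => l b ≤ r bm) with hFib
    have hFsub : Fib ⊆ B.filter (fun b => l b ≤ r bm ∧ r bm ≤ r b) := by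
      intro b hb
      simp only [hFib, Finset.mem_filter] at hb ⊢
      exact ⟨hb.1, hb.2, hmin b hb.1⟩
    have hFcard : Fib.card ≤ C := by
      calc Fib.card ≤ _ := Finset.card_le_card hFsub
        _ ≤ C := by have := hfib (r bm); omega
    set B' := B \ Fib with hB'
    have hB'card : K * (C + 1) ≤ B'.card := by
      have h1 : B'.card = B.card - Fib.card := by
        rw [hB']
        exact Finset.card_sdiff_of_subset (Finset.filter_subset _ _)
      have h2 : (K+1) * (C+1) = K * (C+1) + (C+1) := by ring
      omega
    have hB'B : B' ⊆ B := Finset.sdiff_subset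
    rcases ih B' (fun b hb => hlr b (hB'B hb)) hB'card with h | ⟨bs, hlen, hmem, hpw⟩
    · obtain ⟨t, ht⟩ := h
      exfalso
      have : (B'.filter (fun b => l b ≤ t ∧ t ≤ r b)) ⊆
          (B.filter (fun b => l b ≤ t ∧ t ≤ r b)) := Finset.filter_subset_filter _ hB'B
      have := Finset.card_le_card this
      have := hfib t
      omega
    · refine Or.inr ⟨bm :: bs, by simp [hlen], ?_, ?_⟩
      · intro b hb
        rcases List.mem_cons.mp hb with rfl | hb'
        · exact hbm
        · exact hB'B (hmem b hb')
      · rw [List.pairwise_cons]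
        refine ⟨?_, hpw⟩
        intro b hb
        have hbB' := hmem b hb
        rw [hB'] at hbB'
        have := Finset.mem_sdiff.mp hbB'
        have hnotF : ¬ (l b ≤ r bm) := by
          intro hc
          exact this.2 (by simp [hFib, Finset.mem_filter]; exact ⟨this.1, hc⟩)
        omega


lemma assemble (v : List ℕ) (m R' kk : ℕ) (hm : 1 ≤ m) (hR' : 1 ≤ R')
    (U₀ : Finset ℕ) (hU : U₀.card ≤ kk)
    (Gs : List (Finset ℕ)) (hlen : 2 ^ kk * R' ≤ Gs.length)
    (hcard : ∀ G ∈ Gs, G.card = m)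
    (hbound : ∀ G ∈ Gs, ∀ a ∈ G, a < v.length)
    (hletters : ∀ G ∈ Gs, (G.image (fun a => v.getD a 0)).card = m)
    (hsub : ∀ G ∈ Gs, (G.image (fun a => v.getD a 0)) ⊆ U₀)
    (hord : Gs.Pairwise (fun G G' => ∀ a ∈ G, ∀ b ∈ G', a < b)) :
    ∃ u', u'.Sublist v ∧ StratLike m R' u' := by
  classical
  set M := Gs.length with hM
  set ff : ℕ → ℕ := fun a => v.getD a 0 with hff
  set F : ℕ → Finset ℕ := fun i => (Gs.getD i ∅).image ff with hF
  have hgetDmem : ∀ i, i < M → Gs.getD i ∅ ∈ Gs := by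
    intro i hi
    rw [List.getD_eq_getElem _ _ hi]
    exact List.getElem_mem _
  -- pigeonhole
  have hmaps : ∀ i ∈ Finset.range M, F i ∈ U₀.powersetCard m := by
    intro i hi
    rw [Finset.mem_range] at hi
    rw [Finset.mem_powersetCard]
    exact ⟨hsub _ (hgetDmem i hi), hletters _ (hgetDmem i hi)⟩
  have hchoose : (U₀.powersetCard m).card ≤ 2 ^ kk := by
    rw [Finset.card_powersetCard]
    calc U₀.card.choose m ≤ 2 ^ U₀.card := by
          by_cases hm2 : m ≤ U₀.card
          · calc U₀.card.choose m ≤ ∑ i ∈ Finset.range (U₀.card + 1), U₀.card.choose i :=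
                Finset.single_le_sum (fun i _ => Nat.zero_le _) (Finset.mem_range.mpr (by omega))
              _ = 2 ^ U₀.card := Nat.sum_range_choose _
          · rw [Nat.choose_eq_zero_of_lt (by omega)]; exact Nat.zero_le _
      _ ≤ 2 ^ kk := Nat.pow_le_pow_right (by norm_num) hU
  have hlt : (U₀.powersetCard m).card * (R' - 1) < (Finset.range M).card := by
    rw [Finset.card_range]
    have h1 : (U₀.powersetCard m).card * (R' - 1) ≤ 2 ^ kk * (R' - 1) :=
      Nat.mul_le_mul_right _ hchoose
    have hpos : (0:ℕ) < 2 ^ kk := Nat.pow_pos (by norm_num)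
    have h2 : 2 ^ kk * (R' - 1) < 2 ^ kk * R' :=
      Nat.mul_lt_mul_of_pos_left (by omega) hpos
    omega
  obtain ⟨S, hS, hfib⟩ := Finset.exists_lt_card_fiber_of_mul_lt_card_of_maps_to hmaps hlt
  set fiber := (Finset.range M).filter (fun i => F i = S) with hfiber
  have hfibcard : R' ≤ fiber.card := by omega
  -- selected indices
  set il := (fiber.sort (· ≤ ·)).take R' with hil
  have hilen : il.length = R' := by
    rw [hil, List.length_take, Finset.length_sort]
    omega
  have hilpw : il.Pairwise (· < ·) :=
    List.Pairwise.sublist (List.take_sublist _ _) ((Finset.sortedLT_sort _).pairwise)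
  have hilmem : ∀ i ∈ il, i < M ∧ F i = S := by
    intro i hi
    have : i ∈ fiber := Finset.mem_sort (α := ℕ) (· ≤ ·) |>.mp
      (List.mem_of_mem_take (by exact hi))
    rw [hfiber, Finset.mem_filter, Finset.mem_range] at this
    exact this
  -- chunks
  set chunks := il.map (fun i => ((Gs.getD i ∅).sort (· ≤ ·)).map ff) with hchunks
  set u' := chunks.flatten with hu'
  have hchunklen : ∀ c ∈ chunks, c.length = m := by
    intro c hc
    rw [hchunks] at hc
    simp only [List.mem_map] at hc
    obtain ⟨i, hi, rfl⟩ := hc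
    rw [List.length_map, Finset.length_sort]
    exact hcard _ (hgetDmem i (hilmem i hi).1)
  have hulen : u'.length = R' * m := by
    rw [hu', flatten_length_uniform m chunks hchunklen, hchunks, List.length_map, hilen]
  -- u' as a map over indices
  have hu'eq : u' = (il.flatMap (fun i => (Gs.getD i ∅).sort (· ≤ ·))).map ff := by
    rw [hu', hchunks, List.map_flatMap, List.flatMap_def]
  -- sublist
  have hsubl : u'.Sublist v := by
    rw [hu'eq]
    apply map_getD_sublist 0
    · rw [List.flatMap_def, List.pairwise_flatten]
      constructor
      · intro l hl
        simp only [List.mem_map] at hl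
        obtain ⟨i, _, rfl⟩ := hl
        exact (Finset.sortedLT_sort _).pairwise
      · rw [List.pairwise_map]
        apply hilpw.imp_of_mem
        intro i j hi hj hij
        intro x hx y hy
        rw [Finset.mem_sort] at hx hy
        -- need: elements of G_i < elements of G_j whenever i < j in il
        have hiM := (hilmem i hi).1
        have hjM := (hilmem j hj).1
        have hrel := List.pairwise_iff_getElem.mp hord i j hiM hjM hij
        rw [List.getD_eq_getElem _ _ hiM] at hx
        rw [List.getD_eq_getElem _ _ hjM] at hy
        exact hrel x hx y hy
    · intro a ha
      rw [List.mem_flatMap] at ha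
      obtain ⟨i, hi, hai⟩ := ha
      rw [Finset.mem_sort] at hai
      exact hbound _ (hgetDmem i (hilmem i hi).1) a hai
  -- getD structure of u'
  have hchunkat : ∀ j, j < R' → chunks.getD j [] =
      ((Gs.getD (il.getD j 0) ∅).sort (· ≤ ·)).map ff := by
    intro j hj
    have hjj : j < il.length := by rw [hilen]; exact hj
    have hgd : il.getD j 0 = il[j] := List.getD_eq_getElem _ _ hjj
    rw [hgd, hchunks, List.getD_eq_getElem _ _ (by rw [List.length_map]; exact hjj),
      List.getElem_map]
  have hjlt : ∀ a, a < R' * m → a / m < R' := by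
    intro a ha
    exact Nat.div_lt_of_lt_mul (by rwa [Nat.mul_comm])
  have hilget : ∀ j, j < R' → il.getD j 0 ∈ il := by
    intro j hj
    rw [List.getD_eq_getElem _ _ (by rw [hilen]; exact hj)]
    exact List.getElem_mem _
  have hGmem : ∀ j, j < R' → Gs.getD (il.getD j 0) ∅ ∈ Gs := by
    intro j hj
    exact hgetDmem _ (hilmem _ (hilget j hj)).1
  have hsortlen : ∀ j, j < R' → ((Gs.getD (il.getD j 0) ∅).sort (· ≤ ·)).length = m := by
    intro j hj
    rw [Finset.length_sort]
    exact hcard _ (hGmem j hj)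
  have hgetu' : ∀ a, a < R' * m →
      u'.getD a 0 = ff (((Gs.getD (il.getD (a / m) 0) ∅).sort (· ≤ ·)).getD (a % m) 0) := by
    intro a ha
    have hj := hjlt a ha
    have hmod : a % m < m := Nat.mod_lt _ (by omega)
    have := flatten_getD_uniform 0 m chunks (a / m) (a % m) hchunklen
      (by rw [hchunks, List.length_map, hilen]; exact hj) hmod
    rw [hu']
    have e : a / m * m + a % m = a := by
      rw [Nat.mul_comm]; exact Nat.div_add_mod a m
    conv_lhs => rw [← e]
    rw [this, hchunkat _ hj]
    have hlen2 : ((Gs.getD (il.getD (a/m) 0) ∅).sort (· ≤ ·)).length = m := hsortlen _ hj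
    rw [List.getD_eq_getElem _ _ (by rw [List.length_map, hlen2]; exact hmod),
      List.getElem_map]
    have hgoal : ((Gs.getD (il.getD (a / m) 0) ∅).sort (· ≤ ·)).getD (a % m) 0
        = ((Gs.getD (il.getD (a / m) 0) ∅).sort (· ≤ ·))[a % m]'(by rw [hlen2]; exact hmod) :=
      List.getD_eq_getElem _ _ _
    rw [hgoal]
  have hFS : ∀ j, j < R' → (Gs.getD (il.getD j 0) ∅).image ff = S := by
    intro j hj
    exact (hilmem _ (hilget j hj)).2
  refine ⟨u', hsubl, hulen, ?_, ?_⟩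
  · -- within-block distinct letters
    intro a b ha hb hdiv hne
    rw [hulen] at ha hb
    have hja := hjlt a ha
    have hma : a % m < m := Nat.mod_lt _ (by omega)
    have hmb : b % m < m := Nat.mod_lt _ (by omega)
    rw [hgetu' a ha, hgetu' b hb, ← hdiv]
    set G := Gs.getD (il.getD (a / m) 0) ∅ with hG
    have hslen : (G.sort (· ≤ ·)).length = m := hsortlen _ hja
    have hmodne : a % m ≠ b % m := by
      intro hc
      apply hne
      have e1 := Nat.div_add_mod a m
      have e2 := Nat.div_add_mod b m
      have e3 : m * (a / m) = m * (b / m) := by rw [hdiv]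
      omega
    have hnd : (G.sort (· ≤ ·)).Nodup := Finset.sort_nodup _ _
    rw [List.getD_eq_getElem _ _ (by rw [hslen]; exact hma),
      List.getD_eq_getElem _ _ (by rw [hslen]; exact hmb)]
    have hxne : (G.sort (· ≤ ·))[a % m]'(by rw [hslen]; exact hma) ≠
        (G.sort (· ≤ ·))[b % m]'(by rw [hslen]; exact hmb) := by
      intro hc
      exact hmodne (hnd.getElem_inj_iff.mp hc)
    have hinj : Set.InjOn ff ↑G := by
      apply Finset.card_image_iff.mp
      rw [hletters _ (hGmem _ hja), hcard _ (hGmem _ hja)]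
    intro hc
    apply hxne
    apply hinj ?_ ?_ hc
    · exact Finset.mem_coe.mpr (Finset.mem_sort (α := ℕ) (· ≤ ·) |>.mp (List.getElem_mem _))
    · exact Finset.mem_coe.mpr (Finset.mem_sort (α := ℕ) (· ≤ ·) |>.mp (List.getElem_mem _))
  · -- every block contains every letter
    intro a b ha hb
    rw [hulen] at ha hb
    have hja := hjlt a ha
    have hjb := hjlt b hb
    have hmb : b % m < m := Nat.mod_lt _ (by omega)
    have hxb : u'.getD b 0 ∈ (Gs.getD (il.getD (b / m) 0) ∅).image ff := by
      rw [hgetu' b hb]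
      apply Finset.mem_image_of_mem
      have hgd : ((Gs.getD (il.getD (b / m) 0) ∅).sort (· ≤ ·)).getD (b % m) 0
          = ((Gs.getD (il.getD (b / m) 0) ∅).sort (· ≤ ·))[b % m]'(by
              rw [hsortlen _ hjb]; exact hmb) :=
        List.getD_eq_getElem _ _ _
      rw [hgd]
      exact Finset.mem_sort (α := ℕ) (· ≤ ·) |>.mp (List.getElem_mem _)
    rw [hFS _ hjb, ← hFS _ hja] at hxb
    obtain ⟨x, hxG, hxff⟩ := Finset.mem_image.mp hxb
    have hxs : x ∈ (Gs.getD (il.getD (a / m) 0) ∅).sort (· ≤ ·) :=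
      Finset.mem_sort (α := ℕ) (· ≤ ·) |>.mpr hxG
    obtain ⟨i, hi, hxi⟩ := List.mem_iff_getElem.mp hxs
    rw [hsortlen _ hja] at hi
    have hcc : a / m * m + i < R' * m := by
      have h1 : a / m + 1 ≤ R' := hja
      calc a / m * m + i < (a / m + 1) * m := by ring_nf; omega
        _ ≤ R' * m := Nat.mul_le_mul_right _ h1
    have hdiv2 : (a / m * m + i) / m = a / m := by
      rw [Nat.mul_comm (a/m) m, Nat.mul_add_div (by omega : 0 < m), Nat.div_eq_of_lt hi,
        Nat.add_zero]
    have hmod2 : (a / m * m + i) % m = i := by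
      rw [Nat.mul_add_mod', Nat.mod_eq_of_lt hi]
    refine ⟨a / m * m + i, by rw [hulen]; exact hcc, hdiv2, ?_⟩
    rw [hgetu' _ hcc, hdiv2, hmod2]
    have hgd : ((Gs.getD (il.getD (a / m) 0) ∅).sort (· ≤ ·)).getD i 0
        = ((Gs.getD (il.getD (a / m) 0) ∅).sort (· ≤ ·))[i]'(by rw [hsortlen _ hja]; exact hi) :=
      List.getD_eq_getElem _ _ _
    rw [hgd, hxi, hxff]


lemma core {k R R' : ℕ} (hk : 2 ≤ k) (hR' : 1 ≤ R')
    (hR : (2 ^ k * R' + 2) * (2 ^ k * R' + 2) ≤ R)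
    {u v : List ℕ} (hstrat : StratLike k R u)
    {O : ℕ → ℕ} (hgm : GoodMap u v O) :
    ∃ u', u'.Sublist v ∧ StratLike ((k + 1) / 2) R' u' := by
  classical
  obtain ⟨hulen, hdistinct, hfull⟩ := hstrat
  obtain ⟨hlenv, hbO, hletter, hinj, hlaw⟩ := hgm
  set N := R * k with hN
  set m := (k + 1) / 2 with hm
  have hm1 : 1 ≤ m := by omega
  have hmk : m ≤ k := by omega
  have h2m : 2 * m ≤ k + 1 := by omega
  set Kc := 2 ^ k * R' + 2 with hKc
  have h2k1 : 1 ≤ 2 ^ k := Nat.one_le_two_pow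
  have hKc1 : 2 ≤ Kc := by omega
  have hR1 : 1 ≤ R := by
    have h4 : 4 ≤ Kc * Kc := Nat.mul_le_mul hKc1 hKc1
    omega
  have hN0 : 0 < N := Nat.mul_pos (by omega) (by omega)
  -- position helpers
  have hposlt : ∀ b i, b < R → i < k → b * k + i < N := by
    intro b i hb hi
    calc b * k + i < b * k + k := by omega
      _ = (b + 1) * k := by ring
      _ ≤ R * k := Nat.mul_le_mul_right _ (by omega)
  have hposdiv : ∀ b i, i < k → (b * k + i) / k = b := by
    intro b i hi
    rw [Nat.mul_comm b k, Nat.mul_add_div (by omega), Nat.div_eq_of_lt hi, Nat.add_zero]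
  have hposinj : ∀ b i j, i < k → j < k → i ≠ j → b * k + i ≠ b * k + j := by
    intro b i j _ _ hij
    omega
  -- counting function
  set cnt : ℕ → ℕ → ℕ :=
    fun b t => ((Finset.range k).filter (fun i => O (b * k + i) ≤ t)).card with hcnt
  have hcntmono : ∀ b t t', t ≤ t' → cnt b t ≤ cnt b t' := by
    intro b t t' htt
    apply Finset.card_le_card
    intro i hi
    rw [Finset.mem_filter] at hi ⊢
    exact ⟨hi.1, le_trans hi.2 htt⟩
  have hcntfull : ∀ b, b < R → cnt b (N - 1) = k := by
    intro b hb
    simp only [hcnt]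
    have : (Finset.range k).filter (fun i => O (b * k + i) ≤ N - 1) = Finset.range k := by
      apply Finset.filter_true_of_mem
      intro i hi
      rw [Finset.mem_range] at hi
      have := hbO (b * k + i) (by rw [hulen]; exact hposlt b i hb hi)
      rw [hulen] at this
      omega
    rw [this, Finset.card_range]
  -- the m-th pop time S b and the first pop time l b
  have hSne : ∀ b, b < R → ((Finset.range N).filter (fun t => m ≤ cnt b t)).Nonempty := by
    intro b hb
    refine ⟨N - 1, ?_⟩
    rw [Finset.mem_filter, Finset.mem_range]
    constructor
    · omega
    · rw [hcntfull b hb]; omega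
  set S : ℕ → ℕ := fun b => if hb : b < R then
      (((Finset.range N).filter (fun t => m ≤ cnt b t)).min' (hSne b hb)) else 0 with hS
  have hSprop : ∀ b, b < R → S b < N ∧ m ≤ cnt b (S b) := by
    intro b hb
    have hmem := Finset.min'_mem _ (hSne b hb)
    rw [Finset.mem_filter, Finset.mem_range] at hmem
    rw [hS]
    simp only [dif_pos hb]
    exact hmem
  have hSmin : ∀ b t, b < R → t < S b → cnt b t < m := by
    intro b t hb ht
    by_contra hc
    push_neg at hc
    have htN : t < N := by have := (hSprop b hb).1; omega
    have : t ∈ (Finset.range N).filter (fun t => m ≤ cnt b t) := by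
      rw [Finset.mem_filter, Finset.mem_range]; exact ⟨htN, hc⟩
    have := Finset.min'_le _ _ this
    rw [hS] at ht
    simp only [dif_pos hb] at ht
    omega
  have hlne : ∀ b : ℕ, ((Finset.range k).image (fun i => O (b * k + i))).Nonempty :=
    fun b => Finset.Nonempty.image (by rw [Finset.nonempty_range_iff]; omega) _
  set l : ℕ → ℕ := fun b => ((Finset.range k).image (fun i => O (b * k + i))).min' (hlne b)
    with hl
  have hlmem : ∀ b, ∃ i, i < k ∧ O (b * k + i) = l b := by
    intro b
    have := Finset.min'_mem _ (hlne b)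
    rw [Finset.mem_image] at this
    obtain ⟨i, hi, hOi⟩ := this
    rw [Finset.mem_range] at hi
    exact ⟨i, hi, hOi⟩
  have hlle : ∀ b i, i < k → l b ≤ O (b * k + i) := by
    intro b i hi
    apply Finset.min'_le
    rw [Finset.mem_image]
    exact ⟨i, Finset.mem_range.mpr hi, rfl⟩
  have hlS : ∀ b ∈ Finset.range R, l b ≤ S b := by
    intro b hb
    rw [Finset.mem_range] at hb
    have h1 : 1 ≤ cnt b (S b) := le_trans hm1 (hSprop b hb).2
    simp only [hcnt] at h1
    have h2 : ((Finset.range k).filter (fun i => O (b * k + i) ≤ S b)).Nonempty := by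
      rw [← Finset.card_pos]; omega
    obtain ⟨i, hi⟩ := h2
    rw [Finset.mem_filter, Finset.mem_range] at hi
    exact le_trans (hlle b i hi.1) hi.2
  -- jump: S b is attained as a pop value of block b
  have hjump : ∀ b, b < R → ∃ i, i < k ∧ O (b * k + i) = S b := by
    intro b hb
    by_contra hc
    push_neg at hc
    have hSb := hSprop b hb
    by_cases h0 : S b = 0
    · have h1 : 1 ≤ cnt b (S b) := le_trans hm1 hSb.2
      simp only [hcnt] at h1
      have h2 : ((Finset.range k).filter (fun i => O (b * k + i) ≤ S b)).Nonempty := by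
        rw [← Finset.card_pos]; omega
      obtain ⟨i, hi⟩ := h2
      rw [Finset.mem_filter, Finset.mem_range] at hi
      exact hc i hi.1 (by omega)
    · have hsub2 : (Finset.range k).filter (fun i => O (b * k + i) ≤ S b) ⊆
          (Finset.range k).filter (fun i => O (b * k + i) ≤ S b - 1) := by
        intro i hi
        rw [Finset.mem_filter, Finset.mem_range] at hi ⊢
        have := hc i hi.1
        omega
      have h3 : m ≤ cnt b (S b - 1) := le_trans hSb.2 (Finset.card_le_card hsub2)
      -- (cnt is definitionally these cards)
      have := hSmin b (S b - 1) hb (by omega)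
      omega
  -- S is injective on blocks
  have hSinj : ∀ b b', b < R → b' < R → b ≠ b' → S b ≠ S b' := by
    intro b b' hb hb' hne hc
    obtain ⟨i, hi, hOi⟩ := hjump b hb
    obtain ⟨j, hj, hOj⟩ := hjump b' hb'
    have hx : b * k + i ≠ b' * k + j := by
      intro he
      have e1 : (b * k + i) / k = b := hposdiv b i hi
      have e2 : (b' * k + j) / k = b' := hposdiv b' j hj
      rw [he, e2] at e1
      exact hne e1.symm
    exact hinj _ _ (by rw [hulen]; exact hposlt b i hb hi)
      (by rw [hulen]; exact hposlt b' j hb' hj) hx (by rw [hOi, hOj, hc])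
  -- letter domain
  set U₀ := u.toFinset with hU₀
  have hU : U₀.card ≤ k := by
    have hsub3 : U₀ ⊆ (Finset.range k).image (fun i => u.getD i 0) := by
      intro x hx
      rw [hU₀, List.mem_toFinset, List.mem_iff_getElem] at hx
      obtain ⟨p, hp, hxp⟩ := hx
      obtain ⟨c, hc, hcdiv, hcl⟩ := hfull 0 p (by omega) hp
      rw [Finset.mem_image]
      refine ⟨c, Finset.mem_range.mpr ?_, ?_⟩
      · have h0 : (0:ℕ) / k = 0 := Nat.zero_div k
        rw [h0] at hcdiv
        by_contra hck
        push_neg at hck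
        have : 1 ≤ c / k := (Nat.one_le_div_iff (by omega)).mpr hck
        omega
      · rw [hcl, List.getD_eq_getElem _ _ hp, hxp]
    calc U₀.card ≤ _ := Finset.card_le_card hsub3
      _ ≤ (Finset.range k).card := Finset.card_image_le
      _ = k := Finset.card_range _
  -- group properties helper
  have hgroup : ∀ b (Tb : Finset ℕ), b < R → Tb ⊆ Finset.range k → Tb.card = m →
      ((Tb.image (fun i => O (b * k + i))).card = m ∧
       (∀ a ∈ Tb.image (fun i => O (b * k + i)), a < v.length) ∧
       ((Tb.image (fun i => O (b * k + i))).image (fun a => v.getD a 0)).card = m ∧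
       (Tb.image (fun i => O (b * k + i))).image (fun a => v.getD a 0) ⊆ U₀) := by
    intro b Tb hb hTsub hTcard
    have hTk : ∀ i ∈ Tb, i < k := fun i hi => Finset.mem_range.mp (hTsub hi)
    have himg : (Tb.image (fun i => O (b * k + i))).image (fun a => v.getD a 0) =
        Tb.image (fun i => u.getD (b * k + i) 0) := by
      rw [Finset.image_image]
      apply Finset.image_congr
      intro i hi
      simp only [Function.comp_apply]
      exact hletter _ (by rw [hulen]; exact hposlt b i hb (hTk i hi))
    constructor
    · rw [← hTcard]
      apply Finset.card_image_of_injOn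
      intro i hi j hj hij
      by_contra hne
      exact hinj (b * k + i) (b * k + j)
        (by rw [hulen]; exact hposlt b i hb (hTk i hi))
        (by rw [hulen]; exact hposlt b j hb (hTk j hj))
        (hposinj b i j (hTk i hi) (hTk j hj) hne) hij
    refine ⟨?_, ?_, ?_⟩
    · intro a ha
      rw [Finset.mem_image] at ha
      obtain ⟨i, hi, rfl⟩ := ha
      rw [← hlenv]
      exact hbO _ (by rw [hulen]; exact hposlt b i hb (hTk i hi))
    · rw [himg, ← hTcard]
      apply Finset.card_image_of_injOn
      intro i hi j hj hij
      by_contra hne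
      exact hdistinct (b * k + i) (b * k + j)
        (by rw [hulen]; exact hposlt b i hb (hTk i hi))
        (by rw [hulen]; exact hposlt b j hb (hTk j hj))
        (by rw [hposdiv b i (hTk i hi), hposdiv b j (hTk j hj)])
        (hposinj b i j (hTk i hi) (hTk j hj) hne) hij
    · rw [himg]
      intro x hx
      rw [Finset.mem_image] at hx
      obtain ⟨i, hi, rfl⟩ := hx
      rw [hU₀, List.mem_toFinset]
      have hlt := (by rw [hulen]; exact hposlt b i hb (hTk i hi) : b * k + i < u.length)
      rw [List.getD_eq_getElem _ _ hlt]
      exact List.getElem_mem _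
  -- main dichotomy
  rcases interval_dichotomy l S (Kc - 1) Kc (Finset.range R) hlS
      (by rw [Finset.card_range]; have : Kc - 1 + 1 = Kc := by omega
          rw [this]; exact hR) with ⟨t, hfib⟩ | ⟨bs, hbslen, hbsmem, hbspw⟩
  · -- CASE 1 : many blocks alive at a common time
    have hKc2 : Kc - 1 + 1 = Kc := by omega
    rw [hKc2] at hfib
    set fiber := (Finset.range R).filter (fun b => l b ≤ t ∧ t ≤ S b) with hfiber
    have hfibne : fiber.Nonempty := by rw [← Finset.card_pos]; omega
    set bhat := fiber.max' hfibne with hbhat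
    have hbhatmem : bhat ∈ fiber := Finset.max'_mem _ _
    have hbhatR : bhat < R := by
      have := (Finset.mem_filter.mp hbhatmem).1
      rwa [Finset.mem_range] at this
    obtain ⟨ihat, hihat, hz⟩ := hlmem bhat
    set z := bhat * k + ihat with hzdef
    set tss := l bhat with htss
    have htsst : tss ≤ t := (Finset.mem_filter.mp hbhatmem).2.1
    -- restricted fiber
    set fiber' := fiber.filter (fun b => b ≠ bhat ∧ S b ≠ t) with hfiber'
    have hfib'card : 2 ^ k * R' ≤ fiber'.card := by
      have hone : (fiber.filter (fun b => S b = t)).card ≤ 1 := by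
        apply Finset.card_le_one.mpr
        intro a ha b hb
        rw [Finset.mem_filter] at ha hb
        have haR : a < R := Finset.mem_range.mp (Finset.mem_filter.mp ha.1).1
        have hbR : b < R := Finset.mem_range.mp (Finset.mem_filter.mp hb.1).1
        by_contra hne
        exact hSinj a b haR hbR hne (by rw [ha.2, hb.2])
      have hsub4 : fiber ⊆ fiber' ∪ insert bhat (fiber.filter (fun b => S b = t)) := by
        intro b hb
        rw [Finset.mem_union, Finset.mem_insert]
        by_cases h1 : b = bhat
        · exact Or.inr (Or.inl h1)
        by_cases h2 : S b = t
        · exact Or.inr (Or.inr (Finset.mem_filter.mpr ⟨hb, h2⟩))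
        · exact Or.inl (Finset.mem_filter.mpr ⟨hb, h1, h2⟩)
      have hcard4 := Finset.card_le_card hsub4
      have hcard5 := Finset.card_union_le fiber'
        (insert bhat (fiber.filter (fun b => S b = t)))
      have hcard6 := Finset.card_insert_le bhat (fiber.filter (fun b => S b = t))
      omega
    -- facts about blocks in fiber'
    have hfib'fact : ∀ b ∈ fiber', b < R ∧ b < bhat ∧ cnt b tss ≤ m - 1 := by
      intro b hb
      rw [hfiber', Finset.mem_filter] at hb
      obtain ⟨hbfib, hbne, hbSt⟩ := hb
      have hbR : b < R := Finset.mem_range.mp (Finset.mem_filter.mp hbfib).1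
      have hblt : l b ≤ t ∧ t ≤ S b := (Finset.mem_filter.mp hbfib).2
      have hble : b ≤ bhat := Finset.le_max' _ _ hbfib
      have htS : t < S b := by omega
      have hcnt1 : cnt b t < m := hSmin b t hbR htS
      have hcnt2 : cnt b tss ≤ cnt b t := hcntmono b _ _ htsst
      exact ⟨hbR, by omega, by omega⟩
    -- selection within each block
    have hsel : ∀ b : ℕ, ∃ Tb : Finset ℕ, b ∈ fiber' →
        (Tb ⊆ (Finset.range k).filter (fun i => tss < O (b * k + i)) ∧ Tb.card = m) := by
      intro b
      by_cases hb : b ∈ fiber'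
      · have hfacts := hfib'fact b hb
        have hEcard : m ≤ ((Finset.range k).filter (fun i => tss < O (b * k + i))).card := by
          have hsub5 : Finset.range k ⊆
              (Finset.range k).filter (fun i => O (b * k + i) ≤ tss) ∪
              (Finset.range k).filter (fun i => tss < O (b * k + i)) := by
            intro i hi
            rw [Finset.mem_union, Finset.mem_filter, Finset.mem_filter]
            by_cases h : O (b * k + i) ≤ tss
            · exact Or.inl ⟨hi, h⟩
            · exact Or.inr ⟨hi, by omega⟩
          have hcard7 := Finset.card_le_card hsub5
          have hcard8 := Finset.card_union_le
            ((Finset.range k).filter (fun i => O (b * k + i) ≤ tss))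
            ((Finset.range k).filter (fun i => tss < O (b * k + i)))
          have h5 : cnt b tss ≤ m - 1 := hfacts.2.2
          simp only [hcnt] at h5
          rw [Finset.card_range] at hcard7
          omega
        obtain ⟨Tb, hTb1, hTb2⟩ := Finset.exists_subset_card_eq hEcard
        exact ⟨Tb, fun _ => ⟨hTb1, hTb2⟩⟩
      · exact ⟨∅, fun h => absurd h hb⟩
    choose T hT using hsel
    -- the ordered list of groups
    set ds := (fiber'.sort (· ≤ ·)).reverse with hds
    have hdsmem : ∀ b ∈ ds, b ∈ fiber' := by
      intro b hb
      rw [hds, List.mem_reverse, Finset.mem_sort] at hb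
      exact hb
    have hdslen : ds.length = fiber'.card := by
      rw [hds, List.length_reverse, Finset.length_sort]
    have hdspw : ds.Pairwise (fun b b' => b' < b) := by
      rw [hds, List.pairwise_reverse]
      exact (Finset.sortedLT_sort _).pairwise
    set Gs := ds.map (fun b => (T b).image (fun i => O (b * k + i))) with hGs
    have hGmem : ∀ G ∈ Gs, ∃ b ∈ ds, G = (T b).image (fun i => O (b * k + i)) := by
      intro G hG
      rw [hGs, List.mem_map] at hG
      obtain ⟨b, hb, rfl⟩ := hG
      exact ⟨b, hb, rfl⟩
    have hTprop : ∀ b ∈ ds, T b ⊆ Finset.range k ∧ (T b).card = m ∧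
        (∀ i ∈ T b, tss < O (b * k + i)) := by
      intro b hb
      have := hT b (hdsmem b hb)
      constructor
      · exact fun i hi => Finset.mem_range.mpr (Finset.mem_range.mp
          (Finset.mem_filter.mp (this.1 hi)).1)
      constructor
      · exact this.2
      · intro i hi
        exact (Finset.mem_filter.mp (this.1 hi)).2
    apply assemble v m R' k hm1 hR' U₀ hU Gs
    · rw [hGs, List.length_map, hdslen]; exact hfib'card
    · intro G hG
      obtain ⟨b, hb, rfl⟩ := hGmem G hG
      have hbR := (hfib'fact b (hdsmem b hb)).1
      have hTp := hTprop b hb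
      exact (hgroup b (T b) hbR hTp.1 hTp.2.1).1
    · intro G hG
      obtain ⟨b, hb, rfl⟩ := hGmem G hG
      have hbR := (hfib'fact b (hdsmem b hb)).1
      have hTp := hTprop b hb
      exact (hgroup b (T b) hbR hTp.1 hTp.2.1).2.1
    · intro G hG
      obtain ⟨b, hb, rfl⟩ := hGmem G hG
      have hbR := (hfib'fact b (hdsmem b hb)).1
      have hTp := hTprop b hb
      exact (hgroup b (T b) hbR hTp.1 hTp.2.1).2.2.1
    · intro G hG
      obtain ⟨b, hb, rfl⟩ := hGmem G hG
      have hbR := (hfib'fact b (hdsmem b hb)).1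
      have hTp := hTprop b hb
      exact (hgroup b (T b) hbR hTp.1 hTp.2.1).2.2.2
    · -- ordering between groups : LIFO law
      rw [hGs]
      rw [List.pairwise_map]
      apply hdspw.imp_of_mem
      intro b b' hb hb' hlt'
      intro a ha c hc
      rw [Finset.mem_image] at ha hc
      obtain ⟨i, hi, rfl⟩ := ha
      obtain ⟨j, hj, rfl⟩ := hc
      have hTpb := hTprop b hb
      have hTpb' := hTprop b' hb'
      have hik : i < k := Finset.mem_range.mp (hTpb.1 hi)
      have hjk : j < k := Finset.mem_range.mp (hTpb'.1 hj)
      have hbR := (hfib'fact b (hdsmem b hb)).1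
      have hb'R := (hfib'fact b' (hdsmem b' hb')).1
      have hbbhat := (hfib'fact b (hdsmem b hb)).2.1
      have hb'bhat := (hfib'fact b' (hdsmem b' hb')).2.1
      -- b' < b < bhat ; positions y = b'*k+j < x = b*k+i < z
      have hyx : b' * k + j < b * k + i := by
        calc b' * k + j < b' * k + k := by omega
          _ = (b' + 1) * k := by ring
          _ ≤ b * k := Nat.mul_le_mul_right _ (by omega)
          _ ≤ b * k + i := by omega
      have hxz : b * k + i < z := by
        rw [hzdef]
        calc b * k + i < b * k + k := by omega
          _ = (b + 1) * k := by ring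
          _ ≤ bhat * k := Nat.mul_le_mul_right _ (by omega)
          _ ≤ bhat * k + ihat := by omega
      have hOy : O z < O (b' * k + j) := by
        rw [hz]
        exact hTpb'.2.2 j hj
      have hOx : O z < O (b * k + i) := by
        rw [hz]
        exact hTpb.2.2 i hi
      exact hlaw (b' * k + j) (b * k + i) z hyx hxz
        (by rw [hulen]; exact hposlt bhat ihat hbhatR hihat) hOy hOx
  · -- CASE 2 : many disjoint intervals
    have hsel : ∀ b : ℕ, ∃ Tb : Finset ℕ, b ∈ bs →
        (Tb ⊆ (Finset.range k).filter (fun i => O (b * k + i) ≤ S b) ∧ Tb.card = m) := by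
      intro b
      by_cases hb : b ∈ bs
      · have hbR : b < R := Finset.mem_range.mp (hbsmem b hb)
        have hEcard : m ≤ ((Finset.range k).filter (fun i => O (b * k + i) ≤ S b)).card :=
          (hSprop b hbR).2
        obtain ⟨Tb, hTb1, hTb2⟩ := Finset.exists_subset_card_eq hEcard
        exact ⟨Tb, fun _ => ⟨hTb1, hTb2⟩⟩
      · exact ⟨∅, fun h => absurd h hb⟩
    choose T hT using hsel
    set Gs := bs.map (fun b => (T b).image (fun i => O (b * k + i))) with hGs
    have hGmem : ∀ G ∈ Gs, ∃ b ∈ bs, G = (T b).image (fun i => O (b * k + i)) := by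
      intro G hG
      rw [hGs, List.mem_map] at hG
      obtain ⟨b, hb, rfl⟩ := hG
      exact ⟨b, hb, rfl⟩
    have hTprop : ∀ b ∈ bs, T b ⊆ Finset.range k ∧ (T b).card = m ∧
        (∀ i ∈ T b, O (b * k + i) ≤ S b) := by
      intro b hb
      have := hT b hb
      constructor
      · exact fun i hi => Finset.mem_range.mpr (Finset.mem_range.mp
          (Finset.mem_filter.mp (this.1 hi)).1)
      constructor
      · exact this.2
      · intro i hi
        exact (Finset.mem_filter.mp (this.1 hi)).2
    apply assemble v m R' k hm1 hR' U₀ hU Gs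
    · rw [hGs, List.length_map, hbslen]; omega
    · intro G hG
      obtain ⟨b, hb, rfl⟩ := hGmem G hG
      have hbR : b < R := Finset.mem_range.mp (hbsmem b hb)
      have hTp := hTprop b hb
      exact (hgroup b (T b) hbR hTp.1 hTp.2.1).1
    · intro G hG
      obtain ⟨b, hb, rfl⟩ := hGmem G hG
      have hbR : b < R := Finset.mem_range.mp (hbsmem b hb)
      have hTp := hTprop b hb
      exact (hgroup b (T b) hbR hTp.1 hTp.2.1).2.1
    · intro G hG
      obtain ⟨b, hb, rfl⟩ := hGmem G hG
      have hbR : b < R := Finset.mem_range.mp (hbsmem b hb)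
      have hTp := hTprop b hb
      exact (hgroup b (T b) hbR hTp.1 hTp.2.1).2.2.1
    · intro G hG
      obtain ⟨b, hb, rfl⟩ := hGmem G hG
      have hbR : b < R := Finset.mem_range.mp (hbsmem b hb)
      have hTp := hTprop b hb
      exact (hgroup b (T b) hbR hTp.1 hTp.2.1).2.2.2
    · rw [hGs, List.pairwise_map]
      apply hbspw.imp_of_mem
      intro b b' hb hb' hlt'
      intro a ha c hc
      rw [Finset.mem_image] at ha hc
      obtain ⟨i, hi, rfl⟩ := ha
      obtain ⟨j, hj, rfl⟩ := hc
      have hTpb := hTprop b hb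
      have hTpb' := hTprop b' hb'
      have hik : i < k := Finset.mem_range.mp (hTpb.1 hi)
      have hjk : j < k := Finset.mem_range.mp (hTpb'.1 hj)
      have h1 : O (b * k + i) ≤ S b := hTpb.2.2 i hi
      have h2 : l b' ≤ O (b' * k + j) := hlle b' j hjk
      omega


lemma getD_map_idx (w : List ℕ) (is : List ℕ) (p : ℕ) (hp : p < is.length) :
    (is.map (fun a => w.getD a 0)).getD p 0 = w.getD (is.getD p 0) 0 := by
  rw [List.getD_eq_getElem _ _ (by rw [List.length_map]; exact hp), List.getElem_map,
    List.getD_eq_getElem _ _ hp]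

lemma transfer_strat {w w' u : List ℕ} (h : SockEquiv w w') (hu : u.Sublist w)
    {kk RR : ℕ} (hs : StratLike kk RR u) :
    ∃ u', u'.Sublist w' ∧ StratLike kk RR u' := by
  obtain ⟨is, hpw, hb, rfl⟩ := idx_of_sublist 0 hu
  obtain ⟨hlen, hdis, hful⟩ := hs
  rw [List.length_map] at hlen
  have hb' : ∀ a ∈ is, a < w'.length := fun a ha => by rw [← h.1]; exact hb a ha
  have hidx : ∀ p, p < is.length → is.getD p 0 < w.length := by
    intro p hp
    apply hb
    rw [List.getD_eq_getElem _ _ hp]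
    exact List.getElem_mem _
  have hiff : ∀ p q, p < is.length → q < is.length →
      ((is.map (fun a => w.getD a 0)).getD p 0 = (is.map (fun a => w.getD a 0)).getD q 0 ↔
       (is.map (fun a => w'.getD a 0)).getD p 0 = (is.map (fun a => w'.getD a 0)).getD q 0) := by
    intro p q hp hq
    rw [getD_map_idx w is p hp, getD_map_idx w is q hq,
      getD_map_idx w' is p hp, getD_map_idx w' is q hq]
    exact h.2 _ _ (hidx p hp) (hidx q hq)
  refine ⟨is.map (fun a => w'.getD a 0), map_getD_sublist 0 w' is hpw hb', ?_, ?_, ?_⟩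
  · rw [List.length_map]; exact hlen
  · intro a b ha hb2 hdiv hne
    rw [List.length_map] at ha hb2
    have := hdis a b (by rw [List.length_map]; exact ha) (by rw [List.length_map]; exact hb2)
      hdiv hne
    intro hc
    exact this ((hiff a b ha hb2).mpr hc)
  · intro a b ha hb2
    rw [List.length_map] at ha hb2
    obtain ⟨c, hc, hcdiv, hcl⟩ := hful a b (by rw [List.length_map]; exact ha)
      (by rw [List.length_map]; exact hb2)
    rw [List.length_map] at hc
    refine ⟨c, by rw [List.length_map]; exact hc, hcdiv, ?_⟩
    exact (hiff c b hc hb2).mp hcl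

lemma not_sorted_of_strat2 {w u : List ℕ} (hu : u.Sublist w) {kk : ℕ} (hkk : 2 ≤ kk)
    (hs : StratLike kk 2 u) (hsort : SortedWordSock w) : False := by
  obtain ⟨is, hpw, hb, rfl⟩ := idx_of_sublist 0 hu
  obtain ⟨hlen, hdis, hful⟩ := hs
  rw [List.length_map] at hlen
  have hlen4 : 4 ≤ is.length := by omega
  -- letters 0 and 1 differ
  have h01 : (is.map (fun a => w.getD a 0)).getD 0 0 ≠ (is.map (fun a => w.getD a 0)).getD 1 0 :=
    hdis 0 1 (by rw [List.length_map]; omega) (by rw [List.length_map]; omega)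
      (by rw [Nat.zero_div, Nat.div_eq_of_lt (by omega)]) (by omega)
  -- block 1 contains the letter of position 0
  obtain ⟨c, hc, hcdiv, hcl⟩ := hful kk 0 (by rw [List.length_map]; omega)
    (by rw [List.length_map]; omega)
  rw [List.length_map] at hc
  have hkkdiv : kk / kk = 1 := Nat.div_self (by omega)
  rw [hkkdiv] at hcdiv
  have hc2 : kk ≤ c := by
    have : 1 ≤ c / kk := by omega
    exact (Nat.one_le_div_iff (by omega)).mp this
  have hc1 : 1 < c := by omega
  -- positions in w
  have hpwg := List.pairwise_iff_getElem.mp hpw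
  have e0 : is.getD 0 0 = is[0]'(by omega) := List.getD_eq_getElem _ _ _
  have e1 : is.getD 1 0 = is[1]'(by omega) := List.getD_eq_getElem _ _ _
  have ec : is.getD c 0 = is[c]'hc := List.getD_eq_getElem _ _ _
  have hp01 : is.getD 0 0 < is.getD 1 0 := by
    rw [e0, e1]
    exact hpwg 0 1 (by omega) (by omega) (by omega)
  have hp1c : is.getD 1 0 < is.getD c 0 := by
    rw [e1, ec]
    exact hpwg 1 c (by omega) hc hc1
  have hcw : is.getD c 0 < w.length := by
    apply hb
    rw [List.getD_eq_getElem _ _ hc]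
    exact List.getElem_mem _
  have hkey := hsort (is.getD 0 0) (is.getD 1 0) (is.getD c 0) hp01 hp1c hcw
  rw [getD_map_idx w is 0 (by omega), getD_map_idx w is 1 (by omega)] at h01
  rw [getD_map_idx w is c hc, getD_map_idx w is 0 (by omega)] at hcl
  exact h01 (hkey hcl.symm)

/-- The word `0 1 ⋯ (n-1)` repeated `R` times. -/
def stratWord (n R : ℕ) : List ℕ := (List.range (R * n)).map (· % n)

lemma stratWord_getD (n R a : ℕ) (ha : a < R * n) : (stratWord n R).getD a 0 = a % n := by
  rw [stratWord, List.getD_eq_getElem _ _ (by rw [List.length_map, List.length_range]; exact ha),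
    List.getElem_map, List.getElem_range]

lemma stratWord_strat (n R : ℕ) (hn : 1 ≤ n) : StratLike n R (stratWord n R) := by
  have hlen : (stratWord n R).length = R * n := by
    rw [stratWord, List.length_map, List.length_range]
  refine ⟨hlen, ?_, ?_⟩
  · intro a b ha hb hdiv hne
    rw [hlen] at ha hb
    rw [stratWord_getD n R a ha, stratWord_getD n R b hb]
    intro hc
    apply hne
    have e1 := Nat.div_add_mod a n
    have e2 := Nat.div_add_mod b n
    have e3 : n * (a / n) = n * (b / n) := by rw [hdiv]
    omega
  · intro a b ha hb
    rw [hlen] at ha hb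
    have hja : a / n < R := Nat.div_lt_of_lt_mul (by rwa [Nat.mul_comm] at ha)
    have hbm : b % n < n := Nat.mod_lt _ (by omega)
    refine ⟨a / n * n + b % n, ?_, ?_, ?_⟩
    · rw [hlen]
      calc a / n * n + b % n < (a / n + 1) * n := by ring_nf; omega
        _ ≤ R * n := Nat.mul_le_mul_right _ hja
    · rw [Nat.mul_comm (a/n) n, Nat.mul_add_div (by omega), Nat.div_eq_of_lt hbm, Nat.add_zero]
    · have hcc : a / n * n + b % n < R * n := by
        calc a / n * n + b % n < (a / n + 1) * n := by ring_nf; omega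
          _ ≤ R * n := Nat.mul_le_mul_right _ hja
      rw [stratWord_getD n R _ hcc, stratWord_getD n R b hb, Nat.mul_add_mod',
        Nat.mod_mod_of_dvd]
      exact dvd_refl n
  
lemma stratWord_toFinset (n R : ℕ) (hn : 1 ≤ n) (hR : 1 ≤ R) :
    (stratWord n R).toFinset = Finset.range n := by
  ext x
  rw [List.mem_toFinset, stratWord, List.mem_map, Finset.mem_range]
  constructor
  · rintro ⟨a, _, rfl⟩
    exact Nat.mod_lt _ (by omega)
  · intro hx
    refine ⟨x, ?_, Nat.mod_eq_of_lt hx⟩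
    rw [List.mem_range]
    calc x < n := hx
      _ = 1 * n := (Nat.one_mul n).symm
      _ ≤ R * n := Nat.mul_le_mul_right _ hR

/-- Colors remaining after `s` passes. -/
def halveSeq (n : ℕ) : ℕ → ℕ
  | 0 => n
  | s + 1 => (halveSeq n s + 1) / 2

/-- Number of blocks needed with `j` passes remaining. -/
def blocksNeeded (n : ℕ) : ℕ → ℕ
  | 0 => 2
  | j + 1 => (2 ^ n * blocksNeeded n j + 2) * (2 ^ n * blocksNeeded n j + 2)

lemma halveSeq_le (n : ℕ) : ∀ s, halveSeq n s ≤ n := by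
  intro s
  induction s with
  | zero => exact le_refl n
  | succ s ih =>
    have : halveSeq n (s+1) = (halveSeq n s + 1) / 2 := rfl
    omega

lemma halveSeq_pow (n : ℕ) : ∀ s, n ≤ 2 ^ s * halveSeq n s := by
  intro s
  induction s with
  | zero => simp [halveSeq]
  | succ s ih =>
    have he : halveSeq n (s+1) = (halveSeq n s + 1) / 2 := rfl
    have h2 : halveSeq n s ≤ 2 * halveSeq n (s+1) := by omega
    calc n ≤ 2 ^ s * halveSeq n s := ih
      _ ≤ 2 ^ s * (2 * halveSeq n (s+1)) := Nat.mul_le_mul_left _ h2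
      _ = 2 ^ (s+1) * halveSeq n (s+1) := by ring
  
lemma halveSeq_ge_two (n t : ℕ) (h : 2 ^ t < n) : ∀ s, s ≤ t → 2 ≤ halveSeq n s := by
  have hmono : ∀ s, halveSeq n (s + 1) ≤ halveSeq n s := by
    intro s
    have : halveSeq n (s+1) = (halveSeq n s + 1) / 2 := rfl
    by_cases h0 : halveSeq n s = 0
    · omega
    · omega
  have hchain : ∀ s s', s ≤ s' → halveSeq n s' ≤ halveSeq n s := by
    intro s s' hss
    induction hss with
    | refl => exact le_refl _
    | @step m h ih =>
      exact le_trans (hmono m) ih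
  intro s hs
  have ht2 : 2 ≤ halveSeq n t := by
    by_contra hc
    push_neg at hc
    have hup := halveSeq_pow n t
    have hle1 : halveSeq n t ≤ 1 := by omega
    have hmul : 2 ^ t * halveSeq n t ≤ 2 ^ t * 1 := Nat.mul_le_mul_left _ hle1
    omega
  exact le_trans ht2 (hchain s t hs)

lemma blocksNeeded_ge_two (n : ℕ) : ∀ j, 2 ≤ blocksNeeded n j := by
  intro j
  induction j with
  | zero => exact le_refl 2
  | succ j ih =>
    have he : blocksNeeded n (j+1)
        = (2 ^ n * blocksNeeded n j + 2) * (2 ^ n * blocksNeeded n j + 2) := rfl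
    have h1 : 2 ≤ 2 ^ n * blocksNeeded n j + 2 := by omega
    calc 2 ≤ 2 * 2 := by omega
      _ ≤ _ := by rw [he]; exact Nat.mul_le_mul h1 h1

lemma invariant (n t : ℕ) (hn : 2 ≤ n) (hpow2 : 2 ^ t < n) :
    ∀ s, s ≤ t → ∀ κ ∈ footIter s (⟦stratWord n (blocksNeeded n t)⟧ : SockOrdering),
      ∃ w u : List ℕ, (⟦w⟧ : SockOrdering) = κ ∧ u.Sublist w ∧
        StratLike (halveSeq n s) (blocksNeeded n (t - s)) u := by
  intro s
  induction s with
  | zero =>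
    intro _ κ hκ
    simp only [footIter, Set.mem_singleton_iff] at hκ
    refine ⟨stratWord n (blocksNeeded n t), stratWord n (blocksNeeded n t), hκ.symm,
      List.Sublist.refl _, ?_⟩
    have h0 : halveSeq n 0 = n := rfl
    have h1 : t - 0 = t := by omega
    rw [h0, h1]
    exact stratWord_strat n _ (by omega)
  | succ s ih =>
    intro hst κ hκ
    have hs : s ≤ t := by omega
    simp only [footIter] at hκ
    rw [Set.mem_iUnion₂] at hκ
    obtain ⟨κ₀, hκ₀mem, hκfoot⟩ := hκ
    obtain ⟨w, u, hwκ₀, husub, hustrat⟩ := ih hs κ₀ hκ₀mem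
    obtain ⟨w₁, out, hw₁κ₀, hstack, houtκ⟩ := hκfoot
    have hequiv : SockEquiv w w₁ := Quotient.exact (hwκ₀.trans hw₁κ₀.symm)
    obtain ⟨u₁, hu₁sub, hu₁strat⟩ := transfer_strat hequiv husub hustrat
    have hSR : SR w₁ out := sr_of_isStackOutput hstack
    obtain ⟨z, hzsub, hSRz⟩ := hSR.sublist u₁ hu₁sub
    obtain ⟨O, hO⟩ := sr_goodMap hSRz
    have hk2 : 2 ≤ halveSeq n s := halveSeq_ge_two n t hpow2 s hs
    have hts : t - s = (t - (s + 1)) + 1 := by omega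
    have hcore : (2 ^ (halveSeq n s) * blocksNeeded n (t - (s+1)) + 2) *
        (2 ^ (halveSeq n s) * blocksNeeded n (t - (s+1)) + 2) ≤ blocksNeeded n (t - s) := by
      rw [hts]
      have he : blocksNeeded n ((t - (s+1)) + 1)
          = (2 ^ n * blocksNeeded n (t - (s+1)) + 2) *
            (2 ^ n * blocksNeeded n (t - (s+1)) + 2) := rfl
      rw [he]
      have hle : 2 ^ (halveSeq n s) * blocksNeeded n (t - (s+1)) + 2 ≤
          2 ^ n * blocksNeeded n (t - (s+1)) + 2 := by
        have := Nat.pow_le_pow_right (by norm_num : 1 ≤ 2) (halveSeq_le n s)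
        exact Nat.add_le_add_right (Nat.mul_le_mul_right _ this) 2
      exact Nat.mul_le_mul hle hle
    obtain ⟨u', hu'sub, hu'strat⟩ := core hk2
      (le_trans (by omega) (blocksNeeded_ge_two n (t - (s+1)))) hcore hu₁strat hO
    refine ⟨out, u', houtκ, hu'sub.trans hzsub, ?_⟩
    have : halveSeq n (s+1) = (halveSeq n s + 1) / 2 := rfl
    rw [this]
    exact hu'strat

/-- there is a sock ordering with `n` colors that is not
`(⌈log₂ n⌉ - 1)`-foot-sortable. -/
theorem exists_not_footSortable_with_n_colors (n : ℕ) (hn : 2 ≤ n) :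
    ∃ ρ : SockOrdering, HasColors ρ n ∧ ¬ FootSortable (Nat.clog 2 n - 1) ρ := by
  set t := Nat.clog 2 n - 1 with ht
  have hpow2 : 2 ^ t < n := by
    by_contra hc
    push_neg at hc
    have h1 := (Nat.clog_le_iff_le_pow (by norm_num : 1 < 2)).mpr hc
    have h2 : 1 ≤ Nat.clog 2 n := Nat.clog_pos (by norm_num) hn
    omega
  set Rb := blocksNeeded n t with hRb
  have hRb1 : 1 ≤ Rb := le_trans (by omega) (blocksNeeded_ge_two n t)
  refine ⟨⟦stratWord n Rb⟧, ⟨stratWord n Rb, rfl, ?_⟩, ?_⟩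
  · rw [stratWord_toFinset n Rb (by omega) hRb1]
    exact Finset.card_range n
  · rintro ⟨κ, hκmem, hκsorted⟩
    obtain ⟨w, u, hwκ, husub, hustrat⟩ := invariant n t hn hpow2 t le_rfl κ hκmem
    obtain ⟨w₀, hw₀κ, hsort⟩ := hκsorted
    have hequiv : SockEquiv w w₀ := Quotient.exact (hwκ.trans hw₀κ.symm)
    obtain ⟨u', hu'sub, hu'strat⟩ := transfer_strat hequiv husub hustrat
    have htt : t - t = 0 := by omega
    rw [htt] at hu'strat
    have hk2 : 2 ≤ halveSeq n t := halveSeq_ge_two n t hpow2 t le_rfl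
    exact not_sorted_of_strat2 hu'sub hk2 hu'strat hsort
end

section
/- For every sock ordering ρ of length N, the set foot^{−1}(ρ) = {κ : ρ ∈ foot(κ)} has cardinality at most the Catalan number C_N = (1/(N+1))·binom(2N, N). -/
namespace FootCatalan

open List

def run : List Bool → List ℕ × List ℕ × List ℕ → Option (List ℕ × List ℕ × List ℕ)
  | [], s => some s
  | true :: d, (a :: inp, st, out) => run d (inp, a :: st, out)
  | false :: d, (inp, a :: st, out) => run d (inp, st, out ++ [a])
  | _ :: _, _ => none

theorem run_append (d₁ d₂ : List Bool) : ∀ s, run (d₁ ++ d₂) s = (run d₁ s).bind (run d₂) := by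
  induction d₁ with
  | nil => intro s; simp [run]
  | cons b d ih =>
    rintro ⟨inp, st, out⟩
    cases b
    · cases st with
      | nil => simp [run]
      | cons a st => simpa [run] using ih _
    · cases inp with
      | nil => simp [run]
      | cons a inp => simpa [run] using ih _

theorem step_run {s t} (h : StackStep s t) : ∃ b, run [b] s = some t := by
  cases h with
  | push a inp st out => exact ⟨true, rfl⟩
  | pop a inp st out => exact ⟨false, rfl⟩

theorem rtg_run {s t} (h : Relation.ReflTransGen StackStep s t) : ∃ d, run d s = some t := by
  induction h with
  | refl => exact ⟨[], rfl⟩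
  | tail _ hstep ih =>
    obtain ⟨d, hd⟩ := ih
    obtain ⟨b, hb⟩ := step_run hstep
    exact ⟨d ++ [b], by rw [run_append, hd]; simpa using hb⟩

theorem run_map (f : ℕ → ℕ) (d : List Bool) : ∀ inp st out,
    run d (inp.map f, st.map f, out.map f) =
      Option.map (fun s => (s.1.map f, s.2.1.map f, s.2.2.map f)) (run d (inp, st, out)) := by
  induction d with
  | nil => intro inp st out; simp [run]
  | cons b d ih =>
    intro inp st out
    cases b
    · cases st with
      | nil => simp [run]
      | cons a st => simpa [run] using ih inp st (out ++ [a])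
    · cases inp with
      | nil => simp [run]
      | cons a inp => simpa [run] using ih inp (a :: st) out

theorem run_perm (d : List Bool) : ∀ inp st out inp' st' out',
    run d (inp, st, out) = some (inp', st', out') →
      (inp ++ st ++ out).Perm (inp' ++ st' ++ out') := by
  induction d with
  | nil => intro inp st out inp' st' out' h
           simp [run] at h
           obtain ⟨h1, h2, h3⟩ := h
           subst h1; subst h2; subst h3; exact Perm.refl _
  | cons b d ih =>
    intro inp st out inp' st' out' h
    cases b
    · cases st with
      | nil => simp [run] at h
      | cons a st =>
        refine Perm.trans ?_ (ih _ _ _ _ _ _ h)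
        calc inp ++ (a :: st) ++ out ~ (a :: (inp ++ st)) ++ out :=
              (List.perm_middle.symm).append_right out |>.symm
          _ ~ inp ++ st ++ (out ++ [a]) := by
              simpa [List.append_assoc] using
                (List.perm_append_singleton a (inp ++ st ++ out)).symm
    · cases inp with
      | nil => simp [run] at h
      | cons a inp =>
        refine Perm.trans ?_ (ih _ _ _ _ _ _ h)
        exact (List.perm_middle.symm).append_right out

theorem run_counts (d : List Bool) : ∀ inp st out inp' st' out',
    run d (inp, st, out) = some (inp', st', out') →
      inp.length = inp'.length + d.count true ∧
      out'.length = out.length + d.count false ∧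
      st'.length + d.count false = st.length + d.count true := by
  induction d with
  | nil => intro inp st out inp' st' out' h
           simp [run] at h
           obtain ⟨h1, h2, h3⟩ := h
           subst h1; subst h2; subst h3; simp
  | cons b d ih =>
    intro inp st out inp' st' out' h
    cases b
    · cases st with
      | nil => simp [run] at h
      | cons a st =>
        have := ih _ _ _ _ _ _ h
        simp at this ⊢
        omega
    · cases inp with
      | nil => simp [run] at h
      | cons a inp =>
        have := ih _ _ _ _ _ _ h
        simp at this ⊢
        omega

/-- The set of valid push/pop schedules for length `N`. -/
def DSet (N : ℕ) : Set (List Bool) :=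
  {d | ∃ p, run d (List.range N, [], []) = some ([], [], p)}

theorem dset_counts {N : ℕ} {d : List Bool} (hd : d ∈ DSet N) :
    d.count true = N ∧ d.count false = N ∧
      ∀ i, (d.take i).count false ≤ (d.take i).count true := by
  obtain ⟨p, hp⟩ := hd
  obtain ⟨h1, h2, h3⟩ := run_counts d _ _ _ _ _ _ hp
  simp at h1 h2 h3
  refine ⟨by omega, by omega, fun i => ?_⟩
  have hsplit := run_append (d.take i) (d.drop i) (List.range N, [], [])
  rw [List.take_append_drop, hp] at hsplit
  cases hrun : run (d.take i) (List.range N, [], []) with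
  | none => rw [hrun] at hsplit; simp at hsplit
  | some s =>
    obtain ⟨i', st', o'⟩ := s
    obtain ⟨_, _, h3'⟩ := run_counts _ _ _ _ _ _ _ hrun
    simp at h3'
    omega

open DyckStep Classical in
noncomputable def toDyck (N : ℕ) (d : List Bool) : DyckWord :=
  if h : d ∈ DSet N then
    { toList := d.map fun b => cond b U D
      count_U_eq_count_D := by
        obtain ⟨h1, h2, _⟩ := dset_counts h
        have hU : (d.map fun b => cond b U D).count U = d.count true :=
          List.count_map_of_injective d (fun b => cond b U D) (by decide) true
        have hD : (d.map fun b => cond b U D).count D = d.count false :=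
          List.count_map_of_injective d (fun b => cond b U D) (by decide) false
        rw [hU, hD, h1, h2]
      count_D_le_count_U := by
        intro i
        obtain ⟨_, _, h3⟩ := dset_counts h
        rw [← List.map_take]
        have hU : ((d.take i).map fun b => cond b U D).count U = (d.take i).count true :=
          List.count_map_of_injective (d.take i) (fun b => cond b U D) (by decide) true
        have hD : ((d.take i).map fun b => cond b U D).count D = (d.take i).count false :=
          List.count_map_of_injective (d.take i) (fun b => cond b U D) (by decide) false
        rw [hU, hD]; exact h3 i }
  else 0

open DyckStep in
theorem toDyck_injOn (N : ℕ) : Set.InjOn (toDyck N) (DSet N) := by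
  intro d hd d' hd' hdd
  rw [toDyck, dif_pos hd, toDyck, dif_pos hd'] at hdd
  have : d.map (fun b => cond b U D) = d'.map fun b => cond b U D :=
    congrArg DyckWord.toList hdd
  exact List.map_injective_iff.mpr (by decide) this

open DyckStep in
theorem toDyck_semilength {N : ℕ} {d : List Bool} (hd : d ∈ DSet N) :
    (toDyck N d).semilength = N := by
  rw [toDyck, dif_pos hd]
  have hU : (d.map fun b => cond b U D).count U = d.count true :=
    List.count_map_of_injective d (fun b => cond b U D) (by decide) true
  obtain ⟨h1, _, _⟩ := dset_counts hd
  simpa [DyckWord.semilength, hU] using h1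

theorem dset_encard_le (N : ℕ) : (DSet N).encard ≤ (catalan N : ℕ∞) := by
  have h1 : (DSet N).encard = (toDyck N '' DSet N).encard :=
    ((toDyck_injOn N).encard_image).symm
  have h2 : toDyck N '' DSet N ⊆ {q : DyckWord | q.semilength = N} := by
    rintro q ⟨d, hd, rfl⟩
    exact toDyck_semilength hd
  have h3 : {q : DyckWord | q.semilength = N} =
      Set.range (Subtype.val : {q : DyckWord // q.semilength = N} → DyckWord) :=
    (Subtype.range_coe).symm
  calc (DSet N).encard = (toDyck N '' DSet N).encard := h1
    _ ≤ ({q : DyckWord | q.semilength = N}).encard := Set.encard_mono h2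
    _ = (Set.range (Subtype.val : {q : DyckWord // q.semilength = N} → DyckWord)).encard := by
        rw [h3]
    _ = (Set.univ : Set {q : DyckWord // q.semilength = N}).encard := by
        rw [← Set.image_univ]
        exact Subtype.val_injective.injOn.encard_image
    _ = (Fintype.card {q : DyckWord // q.semilength = N} : ℕ∞) := by
        rw [Set.encard_univ, ENat.card_eq_coe_fintype_card]
    _ = (catalan N : ℕ∞) := by
        rw [DyckWord.card_dyckWord_semilength_eq_catalan]

/-- Extract the final output from a completed run. -/
def extract : Option (List ℕ × List ℕ × List ℕ) → List ℕ
  | some ([], [], p) => p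
  | _ => []

theorem stackOutput_key {w out : List ℕ} (h : IsStackOutput w out) :
    ∃ d p, run d (List.range w.length, [], []) = some ([], [], p) ∧
      p.Perm (List.range w.length) ∧ out = p.map (fun i => w.getD i 0) ∧
      out.length = w.length := by
  obtain ⟨d, hd⟩ := rtg_run h
  have hw : (List.range w.length).map (fun i => w.getD i 0) = w := by
    apply List.ext_getElem (by simp)
    intro i h1 h2
    simp only [List.getElem_map, List.getElem_range]
    exact List.getD_eq_getElem w 0 h2
  have hmap := run_map (fun i => w.getD i 0) d (List.range w.length) [] []
  rw [List.map_nil, hw, hd] at hmap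
  cases hrun : run d (List.range w.length, [], []) with
  | none => rw [hrun] at hmap; simp at hmap
  | some s =>
    obtain ⟨i', st', p⟩ := s
    rw [hrun] at hmap
    simp only [Option.map_some, Option.some_inj, Prod.mk.injEq] at hmap
    obtain ⟨hi, hst, hout⟩ := hmap
    rw [eq_comm, List.map_eq_nil_iff] at hi hst
    subst hi; subst hst
    have hperm := run_perm d _ _ _ _ _ _ hrun
    simp at hperm
    refine ⟨d, p, hrun, hperm.symm, hout, ?_⟩
    rw [hout]
    simp [← hperm.length_eq]

noncomputable def F (ρ : SockOrdering) (d : List Bool) : SockOrdering :=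
  ⟦(List.range ρ.length).map fun i =>
      (Quotient.out ρ).getD ((extract (run d (List.range ρ.length, [], []))).idxOf i) 0⟧

end FootCatalan

/-- `|foot⁻¹(ρ)| ≤ C_N` where `N` is the length of `ρ`. -/
theorem foot_preimage_encard_le_catalan (ρ : SockOrdering) :
    {κ : SockOrdering | ρ ∈ foot κ}.encard ≤ (catalan ρ.length : ℕ∞) := by
  classical
  set N := ρ.length with hN
  have hsub : {κ : SockOrdering | ρ ∈ foot κ} ⊆ FootCatalan.F ρ '' FootCatalan.DSet N := by
    intro κ hκ
    obtain ⟨w, out, hw, hso, hout⟩ := hκ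
    obtain ⟨d, p, hrun, hperm, houtw, hlen⟩ := FootCatalan.stackOutput_key hso
    have hNout : N = out.length := by rw [hN, ← hout]; rfl
    have hNw : w.length = N := by omega
    rw [hNw] at hrun hperm
    have hplen : p.length = N := by rw [hperm.length_eq, List.length_range]
    have hmem : ∀ i, i < N → i ∈ p := fun i hi =>
      hperm.mem_iff.mpr (List.mem_range.mpr hi)
    refine ⟨d, ⟨p, hrun⟩, ?_⟩
    unfold FootCatalan.F
    rw [← hN, hrun]
    have hex : FootCatalan.extract (some ([], [], p)) = p := rfl
    rw [hex, ← hw]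
    apply Quotient.sound
    -- SockEquiv between the constructed word and w
    have hre : SockEquiv (Quotient.out ρ) out :=
      Quotient.exact ((Quotient.out_eq ρ).trans hout.symm)
    have hrlen : (Quotient.out ρ).length = out.length := hre.1
    set r := Quotient.out ρ with hr
    set v := (List.range N).map fun i => r.getD (p.idxOf i) 0 with hv
    have hvlen : v.length = N := by simp [hv]
    have hvget : ∀ i, i < N → v.getD i 0 = r.getD (p.idxOf i) 0 := by
      intro i hi
      rw [hv, List.getD_eq_getElem _ 0 (by simpa [hvlen] using hi)]
      simp
    have hidx : ∀ i, i < N → p.idxOf i < N := by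
      intro i hi
      rw [← hplen]
      exact List.idxOf_lt_length_iff.mpr (hmem i hi)
    have hwget : ∀ i, i < N → w.getD i 0 = out.getD (p.idxOf i) 0 := by
      intro i hi
      have h1 : p.idxOf i < p.length := by rw [hplen]; exact hidx i hi
      rw [houtw, List.getD_eq_getElem (p.map fun i => w.getD i 0) 0 (by simpa using h1),
        List.getElem_map, List.getElem_idxOf h1]
    refine sockEquiv_symm ⟨by rw [hvlen, hNw], fun i j hi hj => ?_⟩
    rw [hNw] at hi hj
    rw [hvget i hi, hvget j hj, hwget i hi, hwget j hj]
    exact (sockEquiv_symm hre).2 (p.idxOf i) (p.idxOf j)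
      (by rw [← hNout]; exact hidx i hi) (by rw [← hNout]; exact hidx j hj)
  calc {κ : SockOrdering | ρ ∈ foot κ}.encard
      ≤ (FootCatalan.F ρ '' FootCatalan.DSet N).encard := Set.encard_mono hsub
    _ ≤ (FootCatalan.DSet N).encard := Set.encard_image_le _ _
    _ ≤ (catalan N : ℕ∞) := FootCatalan.dset_encard_le N
end

section
/- Let n, r ≥ 2 be integers and set t = max(⌊((r−1)/r)·log₄(n)⌋ − 1, 0). Then there exists an r-uniform sock ordering with n colors that is not t-foot-sortable. -/
namespace SockAux

/-- Deterministic run of a stack schedule. `true` = push, `false` = pop. -/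
def run : List Bool → List ℕ → List ℕ → List ℕ → List ℕ
  | [], _, _, o => o
  | true :: s, inp, st, o =>
      match inp with
      | [] => run s [] st o
      | a :: inp => run s inp (a :: st) o
  | false :: s, inp, st, o =>
      match st with
      | [] => run s inp [] o
      | a :: st => run s inp st (o ++ [a])

theorem run_map (s : List Bool) : ∀ (inp st o : List ℕ) (f : ℕ → ℕ),
    run s (inp.map f) (st.map f) (o.map f) = (run s inp st o).map f := by
  induction s with
  | nil => intro inp st o f; rfl
  | cons b s ih =>
    intro inp st o f
    cases b with
    | true =>
      cases inp with
      | nil => simpa [run] using ih [] st o f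
      | cons a inp => simpa [run] using ih inp (a :: st) o f
    | false =>
      cases st with
      | nil => simpa [run] using ih inp [] o f
      | cons a st => simpa [run] using ih inp st (o ++ [a]) f

theorem run_spec (c : List ℕ × List ℕ × List ℕ) (out : List ℕ)
    (h : Relation.ReflTransGen StackStep c ([], [], out)) :
    ∃ s : List Bool, s.length = 2 * c.1.length + c.2.1.length ∧
      run s c.1 c.2.1 c.2.2 = out ∧
      ∀ inp' st' o' : List ℕ, inp'.length = c.1.length → st'.length = c.2.1.length →
        Relation.ReflTransGen StackStep (inp', st', o') ([], [], run s inp' st' o') := by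
  induction h using Relation.ReflTransGen.head_induction_on with
  | refl =>
    refine ⟨[], by simp, rfl, ?_⟩
    intro inp' st' o' h1 h2
    simp only [List.length_nil, List.length_eq_zero_iff] at h1 h2
    subst h1; subst h2
    exact Relation.ReflTransGen.refl
  | head h' _ ih =>
    obtain ⟨s, hlen, hrun, hall⟩ := ih
    cases h' with
    | push a inp st o =>
      refine ⟨true :: s, by simp at hlen ⊢; omega, by simpa [run] using hrun, ?_⟩
      intro inp' st' o' h1 h2
      match inp', h1 with
      | b :: inp'', h1 =>
        have := hall inp'' (b :: st') o' (by simpa using h1) (by simpa using h2)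
        exact Relation.ReflTransGen.head (StackStep.push b inp'' st' o') (by simpa [run] using this)
    | pop a inp st o =>
      refine ⟨false :: s, by simp at hlen ⊢; omega, by simpa [run] using hrun, ?_⟩
      intro inp' st' o' h1 h2
      match st', h2 with
      | b :: st'', h2 =>
        have := hall inp' st'' (o' ++ [b]) (by simpa using h1) (by simpa using h2)
        exact Relation.ReflTransGen.head (StackStep.pop b inp' st'' o') (by simpa [run] using this)

theorem step_perm {c c' : List ℕ × List ℕ × List ℕ} (h : StackStep c c') :
    (c.1 ++ c.2.1 ++ c.2.2).Perm (c'.1 ++ c'.2.1 ++ c'.2.2) := by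
  cases h with
  | push a inp st o =>
    simpa using (List.perm_middle (a := a) (l₁ := inp) (l₂ := st ++ o)).symm
  | pop a inp st o =>
    have h1 : (a :: (st ++ o)).Perm (st ++ (o ++ [a])) := by
      simpa using (List.perm_middle (a := a) (l₁ := st ++ o) (l₂ := [])).symm
    have h2 : (inp ++ (a :: (st ++ o))).Perm (inp ++ (st ++ (o ++ [a]))) :=
      List.Perm.append_left _ h1
    simpa [List.append_assoc] using h2

theorem rtg_perm {c c' : List ℕ × List ℕ × List ℕ}
    (h : Relation.ReflTransGen StackStep c c') :
    (c.1 ++ c.2.1 ++ c.2.2).Perm (c'.1 ++ c'.2.1 ++ c'.2.2) := by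
  induction h with
  | refl => exact List.Perm.refl _
  | tail _ hstep ih => exact ih.trans (step_perm hstep)

end SockAux
namespace SockAux

lemma getD_map_lt (p : List ℕ) (f : ℕ → ℕ) {i : ℕ} (h : i < p.length) :
    (p.map f).getD i 0 = f (p.getD i 0) := by
  rw [List.getD_eq_getElem _ _ (by simpa using h), List.getD_eq_getElem _ _ h,
    List.getElem_map]

lemma getD_range {m i : ℕ} (h : i < m) : (List.range m).getD i 0 = i := by
  rw [List.getD_eq_getElem _ _ (by simpa using h), List.getElem_range]

lemma self_map (w : List ℕ) : (List.range w.length).map (fun i => w.getD i 0) = w := by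
  apply List.ext_getElem (by simp)
  intro i h1 h2
  rw [List.getElem_map, List.getElem_range, List.getD_eq_getElem _ _ h2]

lemma indexOf_le (l : List ℕ) (k : ℕ) (hk : k < l.length) :
    l.idxOf (l.getD k 0) ≤ k := by
  induction l generalizing k with
  | nil => simp at hk
  | cons b l ih =>
    cases k with
    | zero => simp
    | succ k =>
      rw [List.getD_cons_succ]
      by_cases hb : b = l.getD k 0
      · rw [← hb, List.idxOf_cons_self]; omega
      · rw [List.idxOf_cons_ne _ hb]
        have := ih k (by simpa using hk)
        omega

lemma getD_indexOf (l : List ℕ) {a : ℕ} (h : a ∈ l) :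
    l.getD (l.idxOf a) 0 = a := by
  rw [List.getD_eq_getElem _ _ (List.idxOf_lt_length_iff.2 h)]
  exact List.getElem_idxOf _

lemma mem_getD (w : List ℕ) {a : ℕ} (ha : a ∈ w) : ∃ i < w.length, w.getD i 0 = a :=
  ⟨w.idxOf a, List.idxOf_lt_length_iff.2 ha, getD_indexOf w ha⟩

lemma getD_mem (w : List ℕ) {i : ℕ} (h : i < w.length) : w.getD i 0 ∈ w := by
  rw [List.getD_eq_getElem _ _ h]; exact List.getElem_mem _

lemma count_eq_card (w : List ℕ) (a : ℕ) :
    w.count a = ((Finset.range w.length).filter (fun k => w.getD k 0 = a)).card := by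
  induction w with
  | nil => simp
  | cons b w ih =>
    rw [List.count_cons, ih, Finset.card_filter, Finset.card_filter,
      List.length_cons, Finset.sum_range_succ']
    simp only [List.getD_cons_succ, List.getD_cons_zero, beq_iff_eq]

lemma sockEquiv_count {w v : List ℕ} (h : SockEquiv w v) {i : ℕ} (hi : i < w.length) :
    w.count (w.getD i 0) = v.count (v.getD i 0) := by
  rw [count_eq_card, count_eq_card, ← h.1]
  congr 1
  apply Finset.filter_congr
  intro k hk
  rw [Finset.mem_range] at hk
  exact h.2 k i hk hi

lemma counts_of_equiv {w u : List ℕ} {r : ℕ} (h : SockEquiv w u)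
    (hu : ∀ a ∈ u, u.count a = r) : ∀ a ∈ w, w.count a = r := by
  intro a ha
  obtain ⟨i, hi, rfl⟩ := mem_getD w ha
  rw [sockEquiv_count h hi]
  exact hu _ (getD_mem u (h.1 ▸ hi))

end SockAux
namespace SockAux

lemma getD_map_range (f : ℕ → ℕ) {i m : ℕ} (h : i < m) :
    ((List.range m).map f).getD i 0 = f i := by
  rw [getD_map_lt _ _ (by simpa using h), getD_range h]

lemma length_mk (w : List ℕ) : SockOrdering.length ⟦w⟧ = w.length := rfl

/-- The reverse image of a word under the position permutation determined by schedule `s`. -/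
def prev (s : List Bool) (z : List ℕ) : List ℕ :=
  (List.range z.length).map
    (fun i => z.getD ((run s (List.range z.length) [] []).idxOf i) 0)

lemma prev_length (s : List Bool) (z : List ℕ) : (prev s z).length = z.length := by
  simp [prev]

theorem foot_elim {ρ κ : SockOrdering} (h : κ ∈ foot ρ) :
    ∃ (w out : List ℕ) (s : List Bool), (⟦w⟧ : SockOrdering) = ρ ∧
      (⟦out⟧ : SockOrdering) = κ ∧ out.Perm w ∧ s.length = 2 * w.length ∧
      (run s (List.range w.length) [] []).Perm (List.range w.length) ∧
      out = (run s (List.range w.length) [] []).map (fun i => w.getD i 0) := by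
  obtain ⟨w, out, hw, hso, hout⟩ := h
  obtain ⟨s, hslen, hrun, hall⟩ := run_spec (w, [], []) out hso
  have hrange := hall (List.range w.length) [] [] (by simp) rfl
  have hperm1 := rtg_perm hrange
  simp only [List.append_nil, List.nil_append] at hperm1
  have houtw : out.Perm w := by
    have := rtg_perm hso
    simp only [List.append_nil, List.nil_append] at this
    exact this.symm
  have houtdef : out = (run s (List.range w.length) [] []).map (fun i => w.getD i 0) := by
    have hm := run_map s (List.range w.length) [] [] (fun i => w.getD i 0)
    simp only [List.map_nil] at hm
    rw [self_map] at hm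
    rw [← hrun]
    exact hm
  exact ⟨w, out, s, hw, hout, houtw, by simpa using hslen, hperm1.symm, houtdef⟩

lemma equiv_prev {w u p : List ℕ} (hlen : u.length = w.length)
    (hp : p.Perm (List.range w.length))
    (hu : SockEquiv (p.map (fun i => w.getD i 0)) u) :
    SockEquiv w ((List.range w.length).map (fun i => u.getD (p.idxOf i) 0)) := by
  have hplen : p.length = w.length := by simpa using hp.length_eq
  have hmem : ∀ i, i < w.length → i ∈ p := fun i hi =>
    hp.mem_iff.2 (List.mem_range.2 hi)
  have hq : ∀ i, i < w.length → p.idxOf i < p.length := fun i hi =>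
    List.idxOf_lt_length_iff.2 (hmem i hi)
  have key : ∀ i, i < w.length →
      (p.map (fun k => w.getD k 0)).getD (p.idxOf i) 0 = w.getD i 0 := by
    intro i hi
    rw [getD_map_lt _ _ (hq i hi), getD_indexOf p (hmem i hi)]
  refine ⟨by simp, fun i j hi hj => ?_⟩
  rw [getD_map_range _ hi, getD_map_range _ hj]
  have h2 := hu.2 (p.idxOf i) (p.idxOf j)
    (by rw [List.length_map]; exact hq i hi) (by rw [List.length_map]; exact hq j hj)
  rw [key i hi, key j hj] at h2
  exact h2

theorem footIter_inv {r : ℕ} (t : ℕ) (ρ κ : SockOrdering) (h : κ ∈ footIter t ρ)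
    (hρ : RUniform r ρ) : RUniform r κ ∧ κ.length = ρ.length := by
  induction t generalizing κ with
  | zero =>
    rw [footIter, Set.mem_singleton_iff] at h
    exact ⟨h ▸ hρ, h ▸ rfl⟩
  | succ t ih =>
    rw [footIter] at h
    simp only [Set.mem_iUnion, exists_prop] at h
    obtain ⟨κ', hκ', hfoot⟩ := h
    obtain ⟨hκ'u, hκ'len⟩ := ih κ' hκ'
    obtain ⟨u', hu', hcount⟩ := hκ'u
    obtain ⟨w, out, s, hw, hout, hperm, hslen, hpperm, houtdef⟩ := foot_elim hfoot
    have hwe : SockEquiv w u' := Quotient.exact (hw.trans hu'.symm)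
    have hwcount : ∀ a ∈ w, w.count a = r := counts_of_equiv hwe hcount
    have houtcount : ∀ a ∈ out, out.count a = r := by
      intro a ha
      rw [hperm.count_eq]
      exact hwcount a (hperm.mem_iff.1 ha)
    refine ⟨⟨out, hout, houtcount⟩, ?_⟩
    rw [← hout, length_mk, hperm.length_eq, ← length_mk w, hw]
    exact hκ'len

theorem reach (t : ℕ) (ρ κ : SockOrdering) (h : κ ∈ footIter t ρ)
    (u : List ℕ) (hu : (⟦u⟧ : SockOrdering) = κ) :
    ∃ ss : List (List Bool), ss.length = t ∧ (∀ s ∈ ss, s.length = 2 * u.length) ∧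
      (⟦ss.foldr prev u⟧ : SockOrdering) = ρ := by
  induction t generalizing κ u with
  | zero =>
    rw [footIter, Set.mem_singleton_iff] at h
    exact ⟨[], rfl, by simp, by simpa using hu.trans h⟩
  | succ t ih =>
    rw [footIter] at h
    simp only [Set.mem_iUnion, exists_prop] at h
    obtain ⟨κ', hκ', hfoot⟩ := h
    obtain ⟨w, out, s, hw, hout, hperm, hslen, hpperm, houtdef⟩ := foot_elim hfoot
    have hu_out : SockEquiv out u := Quotient.exact (hout.trans hu.symm)
    have hlen_u : u.length = w.length := hu_out.1.symm.trans hperm.length_eq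
    have he := equiv_prev hlen_u hpperm (houtdef ▸ hu_out)
    have hprev : (⟦prev s u⟧ : SockOrdering) = κ' := by
      rw [← hw]
      apply Quotient.sound
      have : prev s u = (List.range w.length).map
          (fun i => u.getD ((run s (List.range w.length) [] []).idxOf i) 0) := by
        rw [prev, hlen_u]
      rw [this]
      exact sockEquiv_symm he
    obtain ⟨ss, hsslen, hsched, hfold⟩ := ih κ' hκ' (prev s u) hprev
    refine ⟨ss ++ [s], by simp [hsslen], ?_, ?_⟩
    · intro s' hs'
      rcases List.mem_append.1 hs' with h1 | h1
      · rw [hsched s' h1, prev_length]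
      · rw [List.mem_singleton.1 h1, hslen, hlen_u]
    · rw [List.foldr_append]
      simpa using hfold

end SockAux
namespace SockAux

lemma div_eq_of {r m i : ℕ} (hr : 0 < r) (h1 : r * m ≤ i) (h2 : i < r * m + r) :
    i / r = m := by
  apply le_antisymm
  · have h2' : i < (m + 1) * r := by
      rw [Nat.succ_mul, Nat.mul_comm m r]; omega
    have := (Nat.div_lt_iff_lt_mul hr).2 h2'
    omega
  · rw [Nat.le_div_iff_mul_le hr, Nat.mul_comm m r]
    omega

theorem block_char {z : List ℕ} {r : ℕ} (hs : SortedWordSock z)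
    (hc : ∀ a ∈ z, z.count a = r) {i : ℕ} (hi : i < z.length) :
    ∀ k < z.length,
      (z.getD k 0 = z.getD i 0 ↔
        z.idxOf (z.getD i 0) ≤ k ∧ k < z.idxOf (z.getD i 0) + r) := by
  set a := z.getD i 0 with ha
  have hmem : a ∈ z := getD_mem z hi
  set s := z.idxOf a with hsdef
  have hsL : s < z.length := List.idxOf_lt_length_iff.2 hmem
  have hgs : z.getD s 0 = a := getD_indexOf z hmem
  have hmin : ∀ m, m < z.length → z.getD m 0 = a → s ≤ m := by
    intro m hm he
    rw [hsdef, ← he]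
    exact indexOf_le z m hm
  have hconv : ∀ k₂, k₂ < z.length → z.getD k₂ 0 = a →
      ∀ m, s ≤ m → m ≤ k₂ → z.getD m 0 = a := by
    intro k₂ hk₂ hgk₂ m h1 h2
    rcases eq_or_lt_of_le h1 with h1' | h1'
    · rw [← h1']; exact hgs
    rcases eq_or_lt_of_le h2 with h2' | h2'
    · rw [h2']; exact hgk₂
    have := hs s m k₂ h1' h2' hk₂ (hgs.trans hgk₂.symm)
    rw [← this, hgs]
  set T := (Finset.range z.length).filter (fun m => z.getD m 0 = a) with hT
  have hTmem : ∀ m, m ∈ T ↔ m < z.length ∧ z.getD m 0 = a := by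
    intro m; simp [hT, Finset.mem_filter, Finset.mem_range]
  have hTcard : T.card = r := by rw [← count_eq_card]; exact hc a hmem
  have hTsub : T ⊆ Finset.Ico s z.length := by
    intro m hm
    rw [hTmem] at hm
    exact Finset.mem_Ico.2 ⟨hmin m hm.1 hm.2, hm.1⟩
  have hsr : s + r ≤ z.length := by
    have := Finset.card_le_card hTsub
    rw [hTcard, Nat.card_Ico] at this
    omega
  have hsub2 : T ⊆ Finset.Ico s (s + r) := by
    intro m hm
    rw [hTmem] at hm
    refine Finset.mem_Ico.2 ⟨hmin m hm.1 hm.2, ?_⟩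
    by_contra hge
    push_neg at hge
    have hsubI : Finset.Ico s (m + 1) ⊆ T := by
      intro x hx
      rw [Finset.mem_Ico] at hx
      rw [hTmem]
      exact ⟨lt_of_le_of_lt (by omega) hm.1, hconv m hm.1 hm.2 x hx.1 (by omega)⟩
    have := Finset.card_le_card hsubI
    rw [hTcard, Nat.card_Ico] at this
    have hms : s ≤ m := hmin m hm.1 hm.2
    omega
  have hsub3 : Finset.Ico s (s + r) ⊆ T := by
    intro k₀ hk₀
    rw [Finset.mem_Ico] at hk₀
    have hk₀L : k₀ < z.length := by omega
    rw [hTmem]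
    refine ⟨hk₀L, ?_⟩
    by_contra hne
    have hsubI : T ⊆ Finset.Ico s k₀ := by
      intro m hm
      rw [hTmem] at hm
      refine Finset.mem_Ico.2 ⟨hmin m hm.1 hm.2, ?_⟩
      by_contra hge
      push_neg at hge
      exact hne (hconv m hm.1 hm.2 k₀ hk₀.1 hge)
    have := Finset.card_le_card hsubI
    rw [hTcard, Nat.card_Ico] at this
    omega
  have hTeq : T = Finset.Ico s (s + r) := Finset.Subset.antisymm hsub2 hsub3
  intro k hk
  constructor
  · intro hka
    have : k ∈ T := (hTmem k).2 ⟨hk, hka⟩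
    rw [hTeq, Finset.mem_Ico] at this
    exact this
  · intro hks
    have : k ∈ T := by rw [hTeq]; exact Finset.mem_Ico.2 hks
    exact ((hTmem k).1 this).2

theorem block_start {z : List ℕ} {r : ℕ} (hr : 0 < r) (hs : SortedWordSock z)
    (hc : ∀ a ∈ z, z.count a = r) :
    ∀ i, i < z.length → r * (i / r) = z.idxOf (z.getD i 0) := by
  have hdvd : ∀ i, i < z.length → r ∣ z.idxOf (z.getD i 0) := by
    intro i
    induction i using Nat.strong_induction_on with
    | _ i IH =>
      intro hi
      rcases Nat.eq_zero_or_pos (z.idxOf (z.getD i 0)) with h0 | hpos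
      · rw [h0]; exact Dvd.intro 0 rfl
      set s := z.idxOf (z.getD i 0) with hsdef
      have hmem : z.getD i 0 ∈ z := getD_mem z hi
      have hsL : s < z.length := List.idxOf_lt_length_iff.2 hmem
      have hsi : s ≤ i := indexOf_le z i hi
      set j := s - 1 with hjdef
      have hji : j < i := by omega
      have hjL : j < z.length := by omega
      have hdj := IH j hji hjL
      have hcharj := block_char hs hc hjL
      have hgs : z.getD s 0 = z.getD i 0 := getD_indexOf z hmem
      have hne : z.getD s 0 ≠ z.getD j 0 := by
        intro he
        have : z.idxOf (z.getD i 0) ≤ j := by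
          rw [← hgs, he]
          exact indexOf_le z j hjL
        omega
      have h1 : ¬(z.idxOf (z.getD j 0) ≤ s ∧ s < z.idxOf (z.getD j 0) + r) := by
        intro hcon
        exact hne ((hcharj s hsL).2 hcon)
      have hsjj : z.idxOf (z.getD j 0) ≤ j := indexOf_le z j hjL
      have h2 : j < z.idxOf (z.getD j 0) + r := ((hcharj j hjL).1 rfl).2
      have hseq : s = z.idxOf (z.getD j 0) + r := by omega
      rw [hseq]
      exact dvd_add hdj dvd_rfl
  intro i hi
  have hsand := (block_char hs hc hi i hi).1 rfl
  obtain ⟨m, hm⟩ := hdvd i hi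
  have : i / r = m := div_eq_of hr (by omega) (by omega)
  rw [this, ← hm]

theorem sorted_pattern {z : List ℕ} {r : ℕ} (hr : 0 < r) (hs : SortedWordSock z)
    (hc : ∀ a ∈ z, z.count a = r) :
    ∀ i, i < z.length → ∀ j, j < z.length →
      (z.getD i 0 = z.getD j 0 ↔ i / r = j / r) := by
  intro i hi j hj
  have hbi := block_start hr hs hc i hi
  have hbj := block_start hr hs hc j hj
  constructor
  · intro he
    have : z.idxOf (z.getD i 0) = z.idxOf (z.getD j 0) := by rw [he]
    have h2 : r * (i / r) = r * (j / r) := by rw [hbi, hbj, this]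
    exact Nat.eq_of_mul_eq_mul_left hr h2
  · intro he
    have h2 : z.idxOf (z.getD i 0) = z.idxOf (z.getD j 0) := by
      rw [← hbi, ← hbj, he]
    have hgi : z.getD (z.idxOf (z.getD i 0)) 0 = z.getD i 0 :=
      getD_indexOf z (getD_mem z hi)
    have hgj : z.getD (z.idxOf (z.getD j 0)) 0 = z.getD j 0 :=
      getD_indexOf z (getD_mem z hj)
    rw [← hgi, ← hgj, h2]

end SockAux
namespace SockAux

/-- The canonical sorted `r`-uniform word with `n` colors. -/
def Zw (n r : ℕ) : List ℕ := (List.range (r * n)).map (fun i => i / r)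

lemma Zw_length (n r : ℕ) : (Zw n r).length = r * n := by simp [Zw]

lemma Zw_getD {n r i : ℕ} (h : i < r * n) : (Zw n r).getD i 0 = i / r :=
  getD_map_range _ h

theorem equiv_Zw {z : List ℕ} {n r : ℕ} (hr : 0 < r) (hs : SortedWordSock z)
    (hc : ∀ a ∈ z, z.count a = r) (hlen : z.length = r * n) :
    SockEquiv z (Zw n r) := by
  refine ⟨by rw [hlen, Zw_length], fun i j hi hj => ?_⟩
  rw [Zw_getD (hlen ▸ hi), Zw_getD (hlen ▸ hj)]
  exact sorted_pattern hr hs hc i hi j hj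

/-- The family of words: identity block followed by `q` permutation blocks. -/
def famWord (n q : ℕ) (f : Fin q → Equiv.Perm (Fin n)) : List ℕ :=
  List.range n ++ (List.ofFn (fun i : Fin q => List.ofFn (fun j : Fin n => ((f i) j : ℕ)))).flatten

lemma famWord_length (n q : ℕ) (f : Fin q → Equiv.Perm (Fin n)) :
    (famWord n q f).length = n + q * n := by
  simp [famWord, List.length_flatten, List.map_ofFn, Function.comp_def, List.sum_ofFn,
    Finset.sum_const, Finset.card_univ, Nat.mul_comm]

lemma famWord_mem {n q : ℕ} {f : Fin q → Equiv.Perm (Fin n)} {x : ℕ}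
    (hx : x ∈ famWord n q f) : x < n := by
  rcases List.mem_append.1 hx with h | h
  · exact List.mem_range.1 h
  · obtain ⟨b, hb, hxb⟩ := List.mem_flatten.1 h
    obtain ⟨i, rfl⟩ := List.mem_ofFn.1 hb
    obtain ⟨j, rfl⟩ := List.mem_ofFn.1 hxb
    exact (f i j).2

lemma famWord_mem' {n q : ℕ} {f : Fin q → Equiv.Perm (Fin n)} {a : ℕ} (ha : a < n) :
    a ∈ famWord n q f :=
  List.mem_append.2 (Or.inl (List.mem_range.2 ha))

lemma famWord_getD_base {n q : ℕ} (f : Fin q → Equiv.Perm (Fin n)) {a : ℕ} (ha : a < n) :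
    (famWord n q f).getD a 0 = a := by
  rw [famWord, List.getD_append _ _ _ _ (by simpa using ha), getD_range ha]

lemma famWord_counts {n q : ℕ} (f : Fin q → Equiv.Perm (Fin n)) :
    ∀ a ∈ famWord n q f, (famWord n q f).count a = q + 1 := by
  intro a ha
  have han : a < n := famWord_mem ha
  rw [famWord, List.count_append]
  have h1 : (List.range n).count a = 1 :=
    List.count_eq_one_of_mem (List.nodup_range (n := n)) (List.mem_range.2 han)
  have h2 : ∀ i : Fin q, (List.ofFn (fun j : Fin n => ((f i) j : ℕ))).count a = 1 := by
    intro i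
    apply List.count_eq_one_of_mem
    · exact List.nodup_ofFn.2 (fun j k hjk =>
        (f i).injective (Fin.val_injective hjk))
    · exact List.mem_ofFn.2 ⟨(f i)⁻¹ ⟨a, han⟩, by simp⟩
  rw [List.count_flatten]
  simp only [List.map_ofFn, Function.comp_def, h2, h1]
  rw [List.sum_ofFn]
  simp [Nat.add_comm]

lemma famWord_toFinset {n q : ℕ} (f : Fin q → Equiv.Perm (Fin n)) :
    (famWord n q f).toFinset = Finset.range n := by
  ext x
  rw [List.mem_toFinset, Finset.mem_range]
  exact ⟨famWord_mem, famWord_mem'⟩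

lemma famWord_rigid {n q : ℕ} {f g : Fin q → Equiv.Perm (Fin n)}
    (h : SockEquiv (famWord n q f) (famWord n q g)) : famWord n q f = famWord n q g := by
  have hlf := famWord_length n q f
  have hlg := famWord_length n q g
  apply List.ext_getElem (by omega)
  intro p h1 h2
  have hp : p < (famWord n q f).length := h1
  have ha : (famWord n q f).getD p 0 < n := famWord_mem (getD_mem _ hp)
  set a := (famWord n q f).getD p 0 with hadef
  have haL : a < (famWord n q f).length := by omega
  have h3 : (famWord n q f).getD p 0 = (famWord n q f).getD a 0 := by
    rw [famWord_getD_base f ha]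
  have h4 : (famWord n q g).getD p 0 = (famWord n q g).getD a 0 := (h.2 p a hp haL).1 h3
  rw [famWord_getD_base g ha] at h4
  rw [← List.getD_eq_getElem _ 0 h1, ← List.getD_eq_getElem _ 0 h2, h4]

lemma flatten_inj {n : ℕ} : ∀ (l1 l2 : List (List ℕ)), l1.length = l2.length →
    (∀ b ∈ l1, b.length = n) → (∀ b ∈ l2, b.length = n) →
    l1.flatten = l2.flatten → l1 = l2 := by
  intro l1
  induction l1 with
  | nil => intro l2 hl _ _ _; cases l2 with
    | nil => rfl
    | cons b t => simp at hl
  | cons b1 t1 ih =>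
    intro l2 hl hb1 hb2 hfl
    cases l2 with
    | nil => simp at hl
    | cons b2 t2 =>
      simp only [List.flatten_cons] at hfl
      have hlen : b1.length = b2.length := by
        rw [hb1 b1 (by simp), hb2 b2 (by simp)]
      obtain ⟨he1, he2⟩ := List.append_inj hfl hlen
      rw [he1, ih t2 (by simpa using hl) (fun b hb => hb1 b (by simp [hb]))
        (fun b hb => hb2 b (by simp [hb])) he2]

lemma famWord_inj {n q : ℕ} {f g : Fin q → Equiv.Perm (Fin n)}
    (h : famWord n q f = famWord n q g) : f = g := by
  rw [famWord, famWord] at h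
  have h2 := List.append_cancel_left h
  have h3 := flatten_inj (n := n) _ _ (by simp) (by
      intro b hb; obtain ⟨i, rfl⟩ := List.mem_ofFn.1 hb; simp) (by
      intro b hb; obtain ⟨i, rfl⟩ := List.mem_ofFn.1 hb; simp) h2
  funext i
  have h4 := congrFun (List.ofFn_inj.1 h3) i
  apply Equiv.ext
  intro j
  have h5 := congrFun (List.ofFn_inj.1 h4) j
  exact Fin.val_injective h5

end SockAux
namespace SockAux

lemma list_decode {t m : ℕ} (ss1 ss2 : List (List Bool))
    (h1 : ss1.length = t) (h2 : ss2.length = t)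
    (e1 : ∀ s ∈ ss1, s.length = m) (e2 : ∀ s ∈ ss2, s.length = m)
    (h : ∀ i : Fin t, ∀ j : Fin m,
      (ss1.getD i []).getD (j : ℕ) false = (ss2.getD i []).getD (j : ℕ) false) :
    ss1 = ss2 := by
  apply List.ext_getElem (by omega)
  intro i hi1 hi2
  apply List.ext_getElem
  · rw [e1 _ (List.getElem_mem _), e2 _ (List.getElem_mem _)]
  intro j hj1 hj2
  have hjm : j < m := by rw [e1 _ (List.getElem_mem _)] at hj1; exact hj1
  have := h ⟨i, by omega⟩ ⟨j, hjm⟩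
  simp only at this
  rw [List.getD_eq_getElem ss1 [] hi1, List.getD_eq_getElem ss2 [] hi2,
    List.getD_eq_getElem _ false hj1, List.getD_eq_getElem _ false hj2] at this
  exact this


lemma keyineq (n r t : ℕ) (hn : 2 ≤ n) (hr : 2 ≤ r)
    (ht : t = (⌊(((r : ℝ) - 1) / r) * Real.logb 4 n⌋ - 1).toNat) :
    2 ^ (2 * (r * n) * t) < n.factorial ^ (r - 1) := by
  have hfac2 : 2 ≤ n.factorial := le_trans hn (Nat.self_le_factorial n)
  rcases Nat.eq_zero_or_pos t with ht0 | htpos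
  · subst ht0
    simpa using Nat.one_lt_pow (by omega) (by omega)
  set x : ℝ := (((r : ℝ) - 1) / r) * Real.logb 4 n with hx
  have htreal : (t : ℝ) ≤ x - 1 := by
    have h1 : (t : ℤ) = ⌊x⌋ - 1 := by omega
    have h2 : (t : ℝ) = (⌊x⌋ : ℝ) - 1 := by exact_mod_cast congrArg (Int.cast : ℤ → ℝ) h1
    have := Int.floor_le x
    linarith
  have hrpos : (0 : ℝ) < r := by positivity
  have hnpos : (0 : ℝ) < n := by positivity
  rw [← Nat.cast_lt (α := ℝ)]
  push_cast
  have hL : (2 : ℝ) ^ (2 * (r * n) * t) = (4 : ℝ) ^ ((r * n * t : ℕ) : ℝ) := by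
    rw [Real.rpow_natCast, show 2 * (r * n) * t = 2 * (r * n * t) by ring, pow_mul]
    norm_num
  rw [hL]
  have hstep1 : (4 : ℝ) ^ ((r * n * t : ℕ) : ℝ) ≤
      (n : ℝ) ^ (((n : ℝ) * ((r : ℝ) - 1))) / (4 : ℝ) ^ (((r : ℝ) * n)) := by
    have hexp : ((r * n * t : ℕ) : ℝ) ≤ (r : ℝ) * n * (x - 1) := by
      push_cast
      have h0 : (0 : ℝ) ≤ (r : ℝ) * n := by positivity
      nlinarith [htreal, h0]
    have hmono := Real.rpow_le_rpow_of_exponent_le (by norm_num : (1:ℝ) ≤ 4) hexp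
    refine hmono.trans_eq ?_
    have hsub : (r : ℝ) * n * (x - 1) = (n : ℝ) * ((r : ℝ) - 1) * Real.logb 4 n - (r : ℝ) * n := by
      rw [hx]; field_simp
    rw [hsub, Real.rpow_sub (by norm_num), mul_comm ((n:ℝ) * ((r:ℝ)-1)) (Real.logb 4 n),
      Real.rpow_mul (by norm_num), Real.rpow_logb (by norm_num) (by norm_num) hnpos]
  refine lt_of_le_of_lt hstep1 ?_
  have hfact : (n : ℝ) ^ n / Real.exp n ≤ (n.factorial : ℝ) := by
    have h1 := Real.pow_div_factorial_le_exp (x := (n : ℝ)) (by positivity) n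
    rw [div_le_iff₀ (by positivity : (0:ℝ) < (n.factorial : ℝ))] at h1
    rw [div_le_iff₀ (Real.exp_pos _)]
    linarith
  have h2 : ((n : ℝ) ^ n / Real.exp n) ^ (r - 1) ≤ (n.factorial : ℝ) ^ (r - 1) :=
    pow_le_pow_left₀ (by positivity) hfact _
  refine lt_of_lt_of_le ?_ h2
  -- rewrite LHS rpow as nat pow
  have hc1 : ((n * (r - 1) : ℕ) : ℝ) = (n : ℝ) * ((r : ℝ) - 1) := by
    push_cast [Nat.cast_sub (by omega : 1 ≤ r)]; ring
  have hA : (n : ℝ) ^ ((n : ℝ) * ((r : ℝ) - 1)) = (n : ℝ) ^ (n * (r - 1) : ℕ) := by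
    rw [← hc1, Real.rpow_natCast]
  have hc2 : ((r * n : ℕ) : ℝ) = (r : ℝ) * n := by push_cast; ring
  have hB : (4 : ℝ) ^ ((r : ℝ) * (n : ℝ)) = (4 : ℝ) ^ (r * n : ℕ) := by
    rw [← hc2, Real.rpow_natCast]
  have hRHS : ((n : ℝ) ^ n / Real.exp n) ^ (r - 1) =
      (n : ℝ) ^ (n * (r - 1) : ℕ) / Real.exp 1 ^ (n * (r - 1) : ℕ) := by
    rw [div_pow, ← pow_mul]
    congr 1
    rw [← Real.exp_one_pow, ← pow_mul]
  rw [hA, hB, hRHS]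
  apply div_lt_div_of_pos_left
  · positivity
  · positivity
  · calc Real.exp 1 ^ (n * (r - 1)) < 4 ^ (n * (r - 1)) := by
          apply pow_lt_pow_left₀ (lt_of_lt_of_le Real.exp_one_lt_d9 (by norm_num))
            (le_of_lt (Real.exp_pos 1)) (Nat.mul_ne_zero (by omega) (by omega))
      _ ≤ 4 ^ (r * n) := by
          apply pow_le_pow_right₀ (by norm_num)
          rw [Nat.mul_comm r n]
          exact Nat.mul_le_mul_left n (by omega)

end SockAux
/-- there exists an `r`-uniform sock ordering with `n` colors that is not
`max(⌊((r-1)/r)·log₄ n⌋ - 1, 0)`-foot-sortable. -/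
theorem exists_rUniform_not_footSortable (n r : ℕ) (hn : 2 ≤ n) (hr : 2 ≤ r) :
    ∃ ρ : SockOrdering, RUniform r ρ ∧ HasColors ρ n ∧
      ¬ FootSortable (⌊(((r : ℝ) - 1) / r) * Real.logb 4 n⌋ - 1).toNat ρ := by
  classical
  open SockAux in
  set t := (⌊(((r : ℝ) - 1) / r) * Real.logb 4 n⌋ - 1).toNat with htdef
  set q := r - 1 with hqdef
  have hq1 : q + 1 = r := by omega
  by_contra hcon
  push_neg at hcon
  -- every member of the family is t-foot-sortable; extract a schedule list for each
  have key : ∀ f : Fin q → Equiv.Perm (Fin n), ∃ ss : List (List Bool),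
      ss.length = t ∧ (∀ s ∈ ss, s.length = 2 * (r * n)) ∧
      (⟦ss.foldr prev (Zw n r)⟧ : SockOrdering) = ⟦famWord n q f⟧ := by
    intro f
    set ρf : SockOrdering := ⟦famWord n q f⟧ with hρf
    have hR : RUniform r ρf := ⟨famWord n q f, rfl, by rw [← hq1]; exact famWord_counts f⟩
    have hC : HasColors ρf n :=
      ⟨famWord n q f, rfl, by rw [famWord_toFinset, Finset.card_range]⟩
    obtain ⟨κ, hκ, hsor⟩ := hcon ρf hR hC
    obtain ⟨hκU, hκlen⟩ := footIter_inv t ρf κ hκ hR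
    obtain ⟨z, hz, hzsort⟩ := hsor
    obtain ⟨u', hu', hcnt⟩ := hκU
    have hze : SockEquiv z u' := Quotient.exact (hz.trans hu'.symm)
    have hzcnt : ∀ a ∈ z, z.count a = r := counts_of_equiv hze hcnt
    have hzlen : z.length = r * n := by
      have h1 : z.length = κ.length := by rw [← hz, length_mk]
      have h2 : ρf.length = n + q * n := by rw [hρf, length_mk, famWord_length]
      have : z.length = n + q * n := by rw [h1, hκlen, h2]
      rw [this, ← hq1]
      ring
    have hzZ : SockEquiv z (Zw n r) := equiv_Zw (by omega) hzsort hzcnt hzlen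
    have hZκ : (⟦Zw n r⟧ : SockOrdering) = κ := by
      rw [← hz]
      exact (Quotient.sound hzZ).symm
    obtain ⟨ss, hss1, hss2, hss3⟩ := reach t ρf κ hκ (Zw n r) hZκ
    refine ⟨ss, hss1, ?_, hss3⟩
    intro s hs
    rw [hss2 s hs, Zw_length]
  choose SS hSS1 hSS2 hSS3 using key
  set M := 2 * (r * n) with hM
  let enc : (Fin q → Equiv.Perm (Fin n)) → (Fin t → Fin M → Bool) :=
    fun f i j => ((SS f).getD (i : ℕ) []).getD (j : ℕ) false
  have hinj : Function.Injective enc := by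
    intro f g he
    have hss : SS f = SS g := by
      apply list_decode (SS f) (SS g) (hSS1 f) (hSS1 g) (hSS2 f) (hSS2 g)
      intro i j
      exact congrFun (congrFun he i) j
    have heq : (⟦famWord n q f⟧ : SockOrdering) = ⟦famWord n q g⟧ := by
      rw [← hSS3 f, ← hSS3 g, hss]
    exact famWord_inj (famWord_rigid (Quotient.exact heq))
  have hcard := Fintype.card_le_of_injective enc hinj
  simp only [Fintype.card_fun, Fintype.card_perm, Fintype.card_fin,
    Fintype.card_bool] at hcard
  have hcard2 : n.factorial ^ q ≤ 2 ^ (2 * (r * n) * t) := by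
    calc n.factorial ^ q ≤ (2 ^ M) ^ t := hcard
    _ = 2 ^ (2 * (r * n) * t) := by rw [← pow_mul]
  have hkey := keyineq n r t hn hr htdef
  rw [hqdef] at hcard2
  omega
end

section
/- For every nonnegative integer t, the set of t-foot-sortable sock orderings is closed under pattern containment: if ρ is t-foot-sortable and ρ contains ρ' as a pattern, then ρ' is t-foot-sortable. -/
/-- Simulation lemma: componentwise sublists of a stack configuration can follow the
run and produce a sublist of the final output. -/
theorem stack_sim {outF : List ℕ} :
    ∀ {s : List ℕ × List ℕ × List ℕ},
      Relation.ReflTransGen StackStep s ([], [], outF) →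
      ∀ {inp' st' out' : List ℕ}, inp'.Sublist s.1 → st'.Sublist s.2.1 →
        out'.Sublist s.2.2 →
        ∃ outF', Relation.ReflTransGen StackStep (inp', st', out') ([], [], outF') ∧
          outF'.Sublist outF := by
  intro s h
  induction h using Relation.ReflTransGen.head_induction_on with
  | refl =>
    intro inp' st' out' h1 h2 h3
    rw [List.sublist_nil] at h1 h2
    subst h1; subst h2
    exact ⟨out', Relation.ReflTransGen.refl, h3⟩
  | head step _ ih =>
    intro inp' st' out' h1 h2 h3
    cases step with
    | push a inp st out =>
      cases h1 with
      | cons _ h1' =>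
        exact ih h1' (h2.cons a) h3
      | cons_cons _ h1' =>
        obtain ⟨outF', hrun, hsub⟩ := ih h1' (h2.cons₂ a) h3
        exact ⟨outF', Relation.ReflTransGen.head (StackStep.push a _ _ _) hrun, hsub⟩
    | pop a inp st out =>
      cases h2 with
      | cons _ h2' =>
        exact ih h1 h2' (h3.trans (List.sublist_append_left out [a]))
      | cons_cons _ h2' =>
        obtain ⟨outF', hrun, hsub⟩ := ih h1 h2' (h3.append_right [a])
        exact ⟨outF', Relation.ReflTransGen.head (StackStep.pop a _ _ _) hrun, hsub⟩

theorem isStackOutput_sublist {w out u : List ℕ} (h : IsStackOutput w out)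
    (hu : u.Sublist w) : ∃ out', IsStackOutput u out' ∧ out'.Sublist out :=
  stack_sim h hu (List.nil_sublist _) (List.nil_sublist _)

/-- Containment is independent of the choice of representative: a sublist of `w` can be
transported along a sock equivalence. -/
theorem sublist_transfer {w v u : List ℕ} (h : SockEquiv w v) (hu : u.Sublist w) :
    ∃ u', u'.Sublist v ∧ SockEquiv u u' := by
  obtain ⟨is, rfl, hpw⟩ := List.sublist_eq_map_getElem hu
  obtain ⟨hl, he⟩ := h
  refine ⟨(is.map (Fin.cast hl)).map (fun x => v[x]), List.map_getElem_sublist ?_, ?_, ?_⟩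
  · exact hpw.map _ (fun a b hab => hab)
  · simp
  · intro i j hi hj
    simp only [List.length_map] at hi hj
    have giw : ∀ k (hk : k < is.length),
        (is.map (fun x => w[x])).getD k 0 = w[(is[k] : ℕ)] := by
      intro k hk
      rw [List.getD_eq_getElem _ _ (by simpa using hk), List.getElem_map]
      rfl
    have giv : ∀ k (hk : k < is.length),
        ((is.map (Fin.cast hl)).map (fun x => v[x])).getD k 0 = v[(is[k] : ℕ)] := by
      intro k hk
      rw [List.getD_eq_getElem _ _ (by simpa using hk), List.getElem_map,
        List.getElem_map]
      rfl
    rw [giw i hi, giw j hj, giv i hi, giv j hj]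
    have hwi : w.getD (is[i] : ℕ) 0 = w[(is[i] : ℕ)] := List.getD_eq_getElem _ _ is[i].isLt
    have hwj : w.getD (is[j] : ℕ) 0 = w[(is[j] : ℕ)] := List.getD_eq_getElem _ _ is[j].isLt
    have hvi : v.getD (is[i] : ℕ) 0 = v[(is[i] : ℕ)] :=
      List.getD_eq_getElem _ _ (by rw [← hl]; exact is[i].isLt)
    have hvj : v.getD (is[j] : ℕ) 0 = v[(is[j] : ℕ)] :=
      List.getD_eq_getElem _ _ (by rw [← hl]; exact is[j].isLt)
    rw [← hwi, ← hwj, ← hvi, ← hvj]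
    exact he _ _ is[i].isLt is[j].isLt

theorem sortedWordSock_of_equiv {w v : List ℕ} (h : SockEquiv w v)
    (hs : SortedWordSock w) : SortedWordSock v := by
  intro i j k hij hjk hk heq
  have hk' : k < w.length := h.1 ▸ hk
  have h1 := h.2 i k (by omega) (by omega)
  have h2 := h.2 i j (by omega) (by omega)
  exact h2.mp (hs i j k hij hjk hk' (h1.mpr heq))

theorem sortedWordSock_sublist {w u : List ℕ} (hu : u.Sublist w)
    (hs : SortedWordSock w) : SortedWordSock u := by
  obtain ⟨is, rfl, hpw⟩ := List.sublist_eq_map_getElem hu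
  intro i j k hij hjk hk heq
  simp only [List.length_map] at hk
  have hi : i < is.length := by omega
  have hj : j < is.length := by omega
  have gi : ∀ m (hm : m < is.length),
      (is.map (fun x => w[x])).getD m 0 = w.getD (is[m] : ℕ) 0 := by
    intro m hm
    rw [List.getD_eq_getElem _ _ (by simpa using hm), List.getElem_map,
      List.getD_eq_getElem _ _ is[m].isLt]
    rfl
  rw [gi i hi, gi k hk] at heq
  rw [gi i hi, gi j hj]
  have pw := List.pairwise_iff_getElem.mp hpw
  exact hs _ _ _ (pw i j hi hj hij) (pw j k hj hk hjk) is[k].isLt heq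

theorem isSorted_of_contains {κ κ' : SockOrdering} (hs : κ.IsSorted)
    (hc : Contains κ κ') : κ'.IsSorted := by
  obtain ⟨v, hv, hsv⟩ := hs
  obtain ⟨w₂, u, hw₂, hsub, hu⟩ := hc
  have hequiv : SockEquiv v w₂ := Quotient.exact (hv.trans hw₂.symm)
  exact ⟨u, hu, sortedWordSock_sublist hsub (sortedWordSock_of_equiv hequiv hsv)⟩

theorem foot_contains {κ κ' κf : SockOrdering} (hc : Contains κ κ')
    (hf : κf ∈ foot κ) : ∃ κf' ∈ foot κ', Contains κf κf' := by
  obtain ⟨w, out, hw, hstack, hout⟩ := hf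
  obtain ⟨w₂, u, hw₂, hsub, hu⟩ := hc
  have hequiv : SockEquiv w₂ w := Quotient.exact (hw₂.trans hw.symm)
  obtain ⟨u', hu'sub, hu'equiv⟩ := sublist_transfer hequiv hsub
  obtain ⟨out', hout'stack, hout'sub⟩ := isStackOutput_sublist hstack hu'sub
  refine ⟨⟦out'⟧, ⟨u', out', ?_, hout'stack, rfl⟩, out, out', hout, hout'sub, rfl⟩
  rw [← hu]
  exact Quotient.sound (sockEquiv_symm hu'equiv)

theorem footIter_contains (t : ℕ) {ρ ρ' : SockOrdering} (hc : Contains ρ ρ') :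
    ∀ κ ∈ footIter t ρ, ∃ κ' ∈ footIter t ρ', Contains κ κ' := by
  induction t generalizing ρ ρ' with
  | zero =>
    intro κ hκ
    simp only [footIter, Set.mem_singleton_iff] at hκ
    subst hκ
    exact ⟨ρ', rfl, hc⟩
  | succ t ih =>
    intro κf hκf
    simp only [footIter, Set.mem_iUnion] at hκf ⊢
    obtain ⟨κ, hκ, hκfoot⟩ := hκf
    obtain ⟨κ', hκ', hcont⟩ := ih hc κ hκ
    obtain ⟨κf', hκf', hcontf⟩ := foot_contains hcont hκfoot
    exact ⟨κf', ⟨κ', hκ', hκf'⟩, hcontf⟩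

/-- the set of `t`-foot-sortable sock orderings is closed under pattern
containment. -/
theorem footSortable_of_contains (t : ℕ) (ρ ρ' : SockOrdering)
    (h : FootSortable t ρ) (hc : Contains ρ ρ') : FootSortable t ρ' := by
  obtain ⟨κ, hκ, hsorted⟩ := h
  obtain ⟨κ', hκ', hcont⟩ := footIter_contains t hc κ hκ
  exact ⟨κ', hκ', isSorted_of_contains hsorted hcont⟩
end
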